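/- arXiv:1905.08144 — 10 statements merged into one kernel-verified Lean document; each statement's English description precedes it below -/
import Mathlib

section
/- Let y₀ ∈ (0,1) and let the sequences (xᵢ)ᵢ≥₀, (yᵢ)ᵢ≥₀, (aᵢ)ᵢ≥₁, (bᵢ)ᵢ≥₁ be defined by the strip recursion, and assume that for every i ≥ 1 the denominator Dᵢ = (aᵢ − x_{i−1})(1 + y_{i−1}) + (bᵢ − x_{i−1})(1 − y_{i−1}) is nonzero and yᵢ ∉ {1, −1}. Then for every i ≥ 1 the identity 4i − 3 = (1/2)·((x_{i−1} + aᵢ)(1 − y_{i−1}) + (x_{i−1} + bᵢ)(1 + y_{i−1})) holds. -/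
noncomputable section

/-- The denominator `Dᵢ = (aᵢ − x_{i−1})(1 + y_{i−1}) + (bᵢ − x_{i−1})(1 − y_{i−1})`. -/
def StripDenom (x y a b : ℕ → ℝ) (i : ℕ) : ℝ :=
  (a i - x (i - 1)) * (1 + y (i - 1)) + (b i - x (i - 1)) * (1 - y (i - 1))

/-- The strip recursion: `x₀ = 0`, `a₁ = 1/(1 − y₀)`, `b₁ = 1/(1 + y₀)`, and for `i ≥ 1`:
`xᵢ = x_{i−1} + 2 − 2(aᵢ − bᵢ)y_{i−1}/Dᵢ`, `yᵢ = y_{i−1} − 4y_{i−1}/Dᵢ`,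
`a_{i+1} = aᵢ + 2/(1 − yᵢ)`, `b_{i+1} = bᵢ + 2/(1 + yᵢ)`. -/
def StripRec (x y a b : ℕ → ℝ) : Prop :=
  x 0 = 0 ∧ a 1 = 1 / (1 - y 0) ∧ b 1 = 1 / (1 + y 0) ∧
    ∀ i : ℕ, 1 ≤ i →
      x i = x (i - 1) + 2 - 2 * (a i - b i) * y (i - 1) / StripDenom x y a b i ∧
      y i = y (i - 1) - 4 * y (i - 1) / StripDenom x y a b i ∧
      a (i + 1) = a i + 2 / (1 - y i) ∧
      b (i + 1) = b i + 2 / (1 + y i)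

/-!
Write `Sᵢ` for the right-hand side. Since `a_{i+1}(1 − yᵢ) = aᵢ(1 − yᵢ) + 2` and
`b_{i+1}(1 + yᵢ) = bᵢ(1 + yᵢ) + 2`, the passage from `Sᵢ` to `S_{i+1}` changes the `a`, `b` part
by `2`. In the `x`, `y` part the terms with `Dᵢ` cancel: `xᵢ − ½(aᵢ − bᵢ)yᵢ` exceeds
`x_{i−1} − ½(aᵢ − bᵢ)y_{i−1}` by exactly `2`. Hence `S_{i+1} = Sᵢ + 4`, and `S₁ = 1`.
-/

def stripLevel (x y a b : ℕ → ℝ) (i : ℕ) : ℝ :=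
  (1 / 2) * ((x (i - 1) + a i) * (1 - y (i - 1)) + (x (i - 1) + b i) * (1 + y (i - 1)))

namespace StripRec

variable {x y a b : ℕ → ℝ}

theorem x_sub_half_mul_y (h : StripRec x y a b) {i : ℕ} (hi : 1 ≤ i) :
    x i - (a i - b i) / 2 * y i = x (i - 1) - (a i - b i) / 2 * y (i - 1) + 2 := by
  obtain ⟨hx, hy, -, -⟩ := h.2.2.2 i hi
  rw [hx, hy]
  ring

theorem a_succ_mul (h : StripRec x y a b) {i : ℕ} (hi : 1 ≤ i) (hy : y i ≠ 1) :
    a (i + 1) * (1 - y i) = a i * (1 - y i) + 2 := by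
  have : 1 - y i ≠ 0 := sub_ne_zero.mpr hy.symm
  rw [(h.2.2.2 i hi).2.2.1, add_mul, div_mul_cancel₀ _ this]

theorem b_succ_mul (h : StripRec x y a b) {i : ℕ} (hi : 1 ≤ i) (hy : y i ≠ -1) :
    b (i + 1) * (1 + y i) = b i * (1 + y i) + 2 := by
  have : 1 + y i ≠ 0 := fun h0 => hy (by linarith)
  rw [(h.2.2.2 i hi).2.2.2, add_mul, div_mul_cancel₀ _ this]

theorem stripLevel_one (h : StripRec x y a b) (hy₁ : y 0 ≠ 1) (hy₂ : y 0 ≠ -1) :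
    stripLevel x y a b 1 = 1 := by
  obtain ⟨hx, ha, hb, -⟩ := h
  have h₁ : 1 - y 0 ≠ 0 := sub_ne_zero.mpr hy₁.symm
  have h₂ : 1 + y 0 ≠ 0 := fun h0 => hy₂ (by linarith)
  simp only [stripLevel, Nat.sub_self, hx, ha, hb]
  field_simp
  ring

theorem stripLevel_succ (h : StripRec x y a b) {i : ℕ} (hi : 1 ≤ i) (hy₁ : y i ≠ 1)
    (hy₂ : y i ≠ -1) : stripLevel x y a b (i + 1) = stripLevel x y a b i + 4 := by
  simp only [stripLevel, Nat.add_sub_cancel]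
  linear_combination h.x_sub_half_mul_y hi + (1 / 2) * h.a_succ_mul hi hy₁ +
    (1 / 2) * h.b_succ_mul hi hy₂

end StripRec

theorem statement4_general (x y a b : ℕ → ℝ) (hy0 : y 0 ∈ Set.Ioo (0 : ℝ) 1)
    (hrec : StripRec x y a b)
    (hy : ∀ i : ℕ, 1 ≤ i → y i ≠ 1 ∧ y i ≠ -1) :
    ∀ i : ℕ, 1 ≤ i →
      4 * (i : ℝ) - 3 =
        (1 / 2) * ((x (i - 1) + a i) * (1 - y (i - 1)) + (x (i - 1) + b i) * (1 + y (i - 1))) := by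
  intro i hi
  change 4 * (i : ℝ) - 3 = stripLevel x y a b i
  induction i, hi using Nat.le_induction with
  | base =>
    rw [hrec.stripLevel_one hy0.2.ne (by linarith [hy0.1])]
    norm_num
  | succ n hn ih =>
    rw [hrec.stripLevel_succ hn (hy n hn).1 (hy n hn).2, ← ih]
    push_cast
    ring

/-- The identity `4i − 3 = ½((x_{i−1} + aᵢ)(1 − y_{i−1}) + (x_{i−1} + bᵢ)(1 + y_{i−1}))`
for the strip recursion. -/
theorem statement4 (x y a b : ℕ → ℝ) (hy0 : y 0 ∈ Set.Ioo (0 : ℝ) 1)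
    (hrec : StripRec x y a b)
    (hD : ∀ i : ℕ, 1 ≤ i → StripDenom x y a b i ≠ 0)
    (hy : ∀ i : ℕ, 1 ≤ i → y i ≠ 1 ∧ y i ≠ -1) :
    ∀ i : ℕ, 1 ≤ i →
      4 * (i : ℝ) - 3 =
        (1 / 2) * ((x (i - 1) + a i) * (1 - y (i - 1)) + (x (i - 1) + b i) * (1 + y (i - 1))) :=
  statement4_general x y a b hy0 hrec hy
end
end

section
/- Let y₀ ∈ (0,1) and let the sequences (xᵢ)ᵢ≥₀, (yᵢ)ᵢ≥₀, (aᵢ)ᵢ≥₁, (bᵢ)ᵢ≥₁ be defined by the strip recursion, with deviations αᵢ = aᵢ − (2i−1) and βᵢ = bᵢ − (2i−1). Assume that for every i ≥ 1 the denominator Dᵢ is nonzero and yᵢ ∉ {1, −1}. Then for every i ≥ 1: αᵢ + βᵢ = 2·y₀²/(1 − y₀²) + 4·( y₁²/(1 − y₁²) + ⋯ + y_{i−1}²/(1 − y_{i−1}²) ), where for i = 1 the sum over j = 1,…,i−1 is empty. -/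
noncomputable section

/-! Each step of the recursion adds `2/(1 − t) + 2/(1 + t) = 4 + 4t²/(1 − t²)` (with `t = yᵢ`)
to `aᵢ + bᵢ`, while `2i − 1` grows by `2`; so `αᵢ + βᵢ` telescopes. -/

theorem one_div_one_sub_add_one_div_one_add {t : ℝ} (h₁ : t ≠ 1) (h₂ : t ≠ -1) :
    1 / (1 - t) + 1 / (1 + t) = 2 + 2 * (t ^ 2 / (1 - t ^ 2)) := by
  have h₁' : 1 - t ≠ 0 := sub_ne_zero.mpr h₁.symm
  have h₂' : 1 + t ≠ 0 := fun h => h₂ (by linarith)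
  have h : 1 - t ^ 2 ≠ 0 := by
    rw [show 1 - t ^ 2 = (1 - t) * (1 + t) by ring]
    exact mul_ne_zero h₁' h₂'
  field_simp
  ring

namespace StripRec

variable {x y a b : ℕ → ℝ}

theorem add_one_eq (hrec : StripRec x y a b) (h₁ : y 0 ≠ 1) (h₂ : y 0 ≠ -1) :
    a 1 + b 1 = 2 + 2 * (y 0 ^ 2 / (1 - y 0 ^ 2)) := by
  rw [hrec.2.1, hrec.2.2.1]
  exact one_div_one_sub_add_one_div_one_add h₁ h₂

theorem add_succ_eq (hrec : StripRec x y a b) {n : ℕ} (hn : 1 ≤ n)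
    (h₁ : y n ≠ 1) (h₂ : y n ≠ -1) :
    a (n + 1) + b (n + 1) = a n + b n + 4 + 4 * (y n ^ 2 / (1 - y n ^ 2)) := by
  obtain ⟨-, -, ha, hb⟩ := hrec.2.2.2 n hn
  have h := one_div_one_sub_add_one_div_one_add h₁ h₂
  rw [ha, hb, div_eq_mul_one_div 2 (1 - y n), div_eq_mul_one_div 2 (1 + y n)]
  linear_combination 2 * h

theorem add_eq (hrec : StripRec x y a b) (hy : ∀ i, y i ≠ 1 ∧ y i ≠ -1) {i : ℕ} (hi : 1 ≤ i) :
    a i + b i = 2 * (2 * (i : ℝ) - 1) + 2 * (y 0 ^ 2 / (1 - y 0 ^ 2)) +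
      4 * ∑ j ∈ Finset.Ico 1 i, y j ^ 2 / (1 - y j ^ 2) := by
  induction i, hi using Nat.le_induction with
  | base =>
    rw [hrec.add_one_eq (hy 0).1 (hy 0).2]
    norm_num
  | succ n hn ih =>
    rw [hrec.add_succ_eq hn (hy n).1 (hy n).2, ih, Finset.sum_Ico_succ_top hn]
    push_cast
    ring

end StripRec

theorem statement6_general (x y a b : ℕ → ℝ) (hy0 : y 0 ∈ Set.Ioo (0 : ℝ) 1)
    (hrec : StripRec x y a b)
    (hy : ∀ i : ℕ, 1 ≤ i → y i ≠ 1 ∧ y i ≠ -1)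
    (α β : ℕ → ℝ)
    (hα : ∀ i : ℕ, 1 ≤ i → α i = a i - (2 * (i : ℝ) - 1))
    (hβ : ∀ i : ℕ, 1 ≤ i → β i = b i - (2 * (i : ℝ) - 1)) :
    ∀ i : ℕ, 1 ≤ i →
      α i + β i = 2 * (y 0) ^ 2 / (1 - (y 0) ^ 2) +
        4 * ∑ j ∈ Finset.Ico 1 i, (y j) ^ 2 / (1 - (y j) ^ 2) := by
  intro i hi
  have hy' : ∀ j, y j ≠ 1 ∧ y j ≠ -1 := by
    rintro (_ | j)
    · exact ⟨hy0.2.ne, by linarith [hy0.1]⟩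
    · exact hy (j + 1) (Nat.succ_pos j)
  rw [hα i hi, hβ i hi, mul_div_assoc]
  linarith [hrec.add_eq hy' hi]

/-- For the deviations `αᵢ = aᵢ − (2i−1)`, `βᵢ = bᵢ − (2i−1)` one has
`αᵢ + βᵢ = 2y₀²/(1 − y₀²) + 4(y₁²/(1 − y₁²) + ⋯ + y_{i−1}²/(1 − y_{i−1}²))`. -/
theorem statement6 (x y a b : ℕ → ℝ) (hy0 : y 0 ∈ Set.Ioo (0 : ℝ) 1)
    (hrec : StripRec x y a b)
    (hD : ∀ i : ℕ, 1 ≤ i → StripDenom x y a b i ≠ 0)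
    (hy : ∀ i : ℕ, 1 ≤ i → y i ≠ 1 ∧ y i ≠ -1)
    (α β : ℕ → ℝ)
    (hα : ∀ i : ℕ, 1 ≤ i → α i = a i - (2 * (i : ℝ) - 1))
    (hβ : ∀ i : ℕ, 1 ≤ i → β i = b i - (2 * (i : ℝ) - 1)) :
    ∀ i : ℕ, 1 ≤ i →
      α i + β i = 2 * (y 0) ^ 2 / (1 - (y 0) ^ 2) +
        4 * ∑ j ∈ Finset.Ico 1 i, (y j) ^ 2 / (1 - (y j) ^ 2) :=
  statement6_general x y a b hy0 hrec hy α β hα hβ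
end
end

section
/- Let 1/√3 < y₀ < 3/√19 and let the sequences (xᵢ), (yᵢ), (aᵢ), (bᵢ) be defined by the strip recursion. Then for every i ≥ 0 one has 0 < yᵢ < 1, and for every i ≥ 1 one has yᵢ < y_{i−1}/2. -/
/-!
Along the recursion the denominators satisfy `D_{i+1} = D_i + 8 y_i² / (1 - y_i²)`, and
`y_i = y_{i-1} (1 - 4 / D_i)`, so `0 < y_i < y_{i-1}/2` as long as `4 < D_i < 8`.
The denominators increase, and the invariant `D_{i+1} ≤ 8 - 4 y_i²` survives a step because the
increment `8 y_{i+1}² / (1 - y_{i+1}²) ≤ 12 y_{i+1}²` is paid for by `4 y_i² - 4 y_{i+1}² ≥ 12 y_{i+1}²`.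
The bounds on `y₀` put `D₁ = 2 (1 + y₀²) / (1 - y₀²)` into `(4, 8 - 4 y₀²]`.
-/

noncomputable section

lemma two_mul_div_add_two_mul_div {t : ℝ} (h₁ : 1 - t ≠ 0) (h₂ : 1 + t ≠ 0) :
    2 * (1 + t) / (1 - t) + 2 * (1 - t) / (1 + t) = 4 + 8 * t ^ 2 / (1 - t ^ 2) := by
  have h : 1 - t ^ 2 ≠ 0 := by
    rw [show 1 - t ^ 2 = (1 - t) * (1 + t) by ring]; exact mul_ne_zero h₁ h₂
  field_simp
  ring

lemma sub_four_mul_div_mem_Ioo {y D : ℝ} (hy : 0 < y) (hD₄ : 4 < D) (hD₈ : D < 8) :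
    y - 4 * y / D ∈ Set.Ioo 0 (y / 2) := by
  have hD : 0 < D := by linarith
  constructor
  · have : 4 * y / D < y := by rw [div_lt_iff₀ hD]; nlinarith
    linarith
  · have : y / 2 < 4 * y / D := by rw [lt_div_iff₀ hD]; nlinarith
    linarith

lemma eight_mul_sq_div_le {t : ℝ} (ht : t ^ 2 ≤ 1 / 3) :
    8 * t ^ 2 / (1 - t ^ 2) ≤ 12 * t ^ 2 := by
  rw [div_le_iff₀ (by linarith)]
  nlinarith [sq_nonneg t]

lemma strip_invariant_step {y D : ℝ} (hy : 0 < y) (hD₄ : 4 < D) (hD₈ : D ≤ 8 - 4 * y ^ 2) :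
    let y' := y - 4 * y / D
    let D' := D + 8 * y' ^ 2 / (1 - y' ^ 2)
    0 < y' ∧ 4 < D' ∧ D' ≤ 8 - 4 * y' ^ 2 := by
  intro y' D'
  obtain ⟨hy'₀, hy'₂⟩ := sub_four_mul_div_mem_Ioo hy hD₄ (by nlinarith)
  have hy'sq : y' ^ 2 < y ^ 2 / 4 := by nlinarith
  have hinc : 8 * y' ^ 2 / (1 - y' ^ 2) ≤ 12 * y' ^ 2 := eight_mul_sq_div_le (by nlinarith)
  have hinc₀ : 0 ≤ 8 * y' ^ 2 / (1 - y' ^ 2) := div_nonneg (by positivity) (by nlinarith)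
  exact ⟨hy'₀, by linarith, by linarith⟩

lemma strip_invariant_base {y : ℝ} (hy : 0 < y) (hlo : 1 / 3 < y ^ 2) (hhi : y ^ 2 ≤ 1 / 2) :
    4 < (1 + y) / (1 - y) + (1 - y) / (1 + y) ∧
      (1 + y) / (1 - y) + (1 - y) / (1 + y) ≤ 8 - 4 * y ^ 2 := by
  have h₁ : 0 < 1 - y := by nlinarith
  have h₂ : 0 < 1 + y := by linarith
  rw [div_add_div _ _ h₁.ne' h₂.ne']
  constructor
  · rw [lt_div_iff₀ (by positivity)]; nlinarith
  · rw [div_le_iff₀ (by positivity)]; nlinarith [mul_nonneg hy.le (sq_nonneg y)]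

namespace StripRec

variable {x y a b : ℕ → ℝ}

lemma stripDenom_one (h : StripRec x y a b) :
    StripDenom x y a b 1 = (1 + y 0) / (1 - y 0) + (1 - y 0) / (1 + y 0) := by
  obtain ⟨hx, ha, hb, -⟩ := h
  simp only [StripDenom, Nat.sub_self, hx, ha, hb, sub_zero, one_div, inv_mul_eq_div]

/-- The pieces `2/(1 ∓ yᵢ)` added to `a` and `b` raise the denominator by
`2(1+yᵢ)/(1-yᵢ) + 2(1-yᵢ)/(1+yᵢ) - 4`; the update of `x` cancels the rest exactly. -/
lemma stripDenom_succ (h : StripRec x y a b) {i : ℕ} (hi : 1 ≤ i)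
    (h₁ : 1 - y i ≠ 0) (h₂ : 1 + y i ≠ 0) :
    StripDenom x y a b (i + 1) = StripDenom x y a b i + 8 * y i ^ 2 / (1 - y i ^ 2) := by
  obtain ⟨hx, hy, ha, hb⟩ := h.2.2.2 i hi
  have hD : StripDenom x y a b i =
      (a i - x (i - 1)) * (1 + y (i - 1)) + (b i - x (i - 1)) * (1 - y (i - 1)) := rfl
  have hD' : StripDenom x y a b (i + 1) =
      (a (i + 1) - x i) * (1 + y i) + (b (i + 1) - x i) * (1 - y i) := rfl
  rw [hD', ha, hb, hx]
  linear_combination (a i - b i) * hy - hD + two_mul_div_add_two_mul_div h₁ h₂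

lemma invariant (h : StripRec x y a b) (hy : 0 < y 0) (hD₄ : 4 < StripDenom x y a b 1)
    (hD₈ : StripDenom x y a b 1 ≤ 8 - 4 * y 0 ^ 2) (i : ℕ) :
    0 < y i ∧ 4 < StripDenom x y a b (i + 1) ∧ StripDenom x y a b (i + 1) ≤ 8 - 4 * y i ^ 2 := by
  induction i with
  | zero => exact ⟨hy, hD₄, hD₈⟩
  | succ i ih =>
    obtain ⟨hyi, hDi₄, hDi₈⟩ := ih
    have hyi' : y (i + 1) = y i - 4 * y i / StripDenom x y a b (i + 1) :=
      (h.2.2.2 (i + 1) (by omega)).2.1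
    obtain ⟨hpos, hlo, hhi⟩ := strip_invariant_step hyi hDi₄ hDi₈
    rw [← hyi'] at hpos hlo hhi
    have hy₁ : y (i + 1) < 1 := by nlinarith
    rw [stripDenom_succ h (by omega) (by linarith) (by linarith)]
    exact ⟨hpos, hlo, hhi⟩

end StripRec

lemma sq_gt_of_one_div_sqrt_lt {c y : ℝ} (hc : 0 ≤ c) (h : 1 / Real.sqrt c < y) :
    1 / c < y ^ 2 := by
  have := pow_lt_pow_left₀ h (by positivity) two_ne_zero
  rwa [div_pow, Real.sq_sqrt hc, one_pow] at this

lemma sq_lt_of_lt_div_sqrt {c d y : ℝ} (hc : 0 ≤ c) (hy : 0 ≤ y) (h : y < d / Real.sqrt c) :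
    y ^ 2 < d ^ 2 / c := by
  have := pow_lt_pow_left₀ h hy two_ne_zero
  rwa [div_pow, Real.sq_sqrt hc] at this

/-- For `1/√3 < y₀ < 3/√19`, all `yᵢ` lie in `(0,1)` and `yᵢ < y_{i−1}/2` for `i ≥ 1`. -/
theorem statement7 (x y a b : ℕ → ℝ)
    (hy0 : 1 / Real.sqrt 3 < y 0) (hy0' : y 0 < 3 / Real.sqrt 19)
    (hrec : StripRec x y a b) :
    (∀ i : ℕ, 0 < y i ∧ y i < 1) ∧
    (∀ i : ℕ, 1 ≤ i → y i < y (i - 1) / 2) := by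
  have hpos : 0 < y 0 := lt_trans (by positivity) hy0
  have hlo : 1 / 3 < y 0 ^ 2 := sq_gt_of_one_div_sqrt_lt (by norm_num) hy0
  have hhi : y 0 ^ 2 < 3 ^ 2 / 19 := sq_lt_of_lt_div_sqrt (by norm_num) hpos.le hy0'
  obtain ⟨hD₄, hD₈⟩ := strip_invariant_base hpos hlo (by linarith)
  rw [← hrec.stripDenom_one] at hD₄ hD₈
  have inv := hrec.invariant hpos hD₄ hD₈
  refine ⟨fun i => ?_, fun i hi => ?_⟩
  · obtain ⟨hyi, hDi₄, hDi₈⟩ := inv i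
    exact ⟨hyi, by nlinarith⟩
  · obtain ⟨j, rfl⟩ : ∃ j, i = j + 1 := ⟨i - 1, by omega⟩
    obtain ⟨hyj, hDj₄, hDj₈⟩ := inv j
    rw [(hrec.2.2.2 (j + 1) hi).2.1, Nat.add_sub_cancel]
    exact (sub_four_mul_div_mem_Ioo hyj hDj₄ (by nlinarith)).2
end
end

section
/- Let 1/√3 < y₀ < 3/√19, let the sequences (xᵢ), (yᵢ), (aᵢ), (bᵢ) be defined by the strip recursion, with deviations αᵢ = aᵢ − (2i−1), βᵢ = bᵢ − (2i−1) and hᵢ = 1 + α_{i+1} + β_{i+1} for i ≥ 0. Then h₀ > 2 and for every i ≥ 1 one has 2 < h_{i−1} < hᵢ; in particular the sequence (hᵢ)ᵢ≥₀ is strictly increasing and bounded below by 2. -/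
theorem lt_one_div_one_sub_add_one_div_one_add_iff {c t : ℝ} (ht : t ^ 2 < 1) :
    c < 1 / (1 - t) + 1 / (1 + t) ↔ c * (1 - t ^ 2) < 2 := by
  obtain ⟨ht₁, ht₂⟩ := abs_lt.mp ((sq_lt_one_iff_abs_lt_one t).mp ht)
  have hsum : 1 / (1 - t) + 1 / (1 + t) = 2 / (1 - t ^ 2) := by
    have h₁ : 1 - t ≠ 0 := by linarith
    have h₂ : 1 + t ≠ 0 := by linarith
    rw [div_add_div _ _ h₁ h₂, div_eq_div_iff (mul_ne_zero h₁ h₂) (by linarith)]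
    ring
  rw [hsum, lt_div_iff₀ (by linarith)]

namespace StripRec

variable {x y a b : ℕ → ℝ}

theorem denom_one (hrec : StripRec x y a b) (hm : 1 - y 0 ≠ 0) (hp : 1 + y 0 ≠ 0) :
    StripDenom x y a b 1 = 2 * (1 / (1 - y 0) + 1 / (1 + y 0)) - 2 := by
  obtain ⟨hx₀, ha₁, hb₁, -⟩ := hrec
  show (a 1 - x 0) * (1 + y 0) + (b 1 - x 0) * (1 - y 0) = _
  rw [hx₀, ha₁, hb₁]
  field_simp
  ring

theorem y_succ (hrec : StripRec x y a b) (i : ℕ) :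
    y (i + 1) = y i * (1 - 4 / StripDenom x y a b (i + 1)) := by
  rw [(hrec.2.2.2 (i + 1) (by omega)).2.1, Nat.add_sub_cancel]
  ring

theorem denom_succ (hrec : StripRec x y a b) (i : ℕ) (hm : 1 - y (i + 1) ≠ 0) (hp : 1 + y (i + 1) ≠ 0) :
    StripDenom x y a b (i + 2) =
      StripDenom x y a b (i + 1) + 4 * (1 / (1 - y (i + 1)) + 1 / (1 + y (i + 1))) - 8 := by
  obtain ⟨hx, hy, ha, hb⟩ := hrec.2.2.2 (i + 1) (by omega)
  rw [Nat.add_sub_cancel] at hx hy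
  have hD_def : StripDenom x y a b (i + 1) =
      (a (i + 1) - x i) * (1 + y i) + (b (i + 1) - x i) * (1 - y i) := rfl
  have hfrac : 2 / (1 - y (i + 1)) * (1 + y (i + 1)) + 2 / (1 + y (i + 1)) * (1 - y (i + 1)) =
      4 * (1 / (1 - y (i + 1)) + 1 / (1 + y (i + 1))) - 4 := by
    field_simp
    ring
  show (a (i + 2) - x (i + 1)) * (1 + y (i + 1)) + (b (i + 2) - x (i + 1)) * (1 - y (i + 1)) = _
  rw [ha, hb, hx]
  linear_combination (a (i + 1) - b (i + 1)) * hy + hfrac - hD_def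

theorem add_succ (hrec : StripRec x y a b) (i : ℕ) :
    a (i + 2) + b (i + 2) =
      a (i + 1) + b (i + 1) + 2 * (1 / (1 - y (i + 1)) + 1 / (1 + y (i + 1))) := by
  obtain ⟨-, -, ha, hb⟩ := hrec.2.2.2 (i + 1) (by omega)
  rw [ha, hb]
  ring

theorem y_mem_Ioo_and_four_lt_denom (hrec : StripRec x y a b) (hy₀ : 0 < y 0) (hy₀' : y 0 < 1)
    (hD₁ : 4 < StripDenom x y a b 1) (n : ℕ) :
    (0 < y n ∧ y n < 1) ∧ 4 < StripDenom x y a b (n + 1) := by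
  induction n with
  | zero => exact ⟨⟨hy₀, hy₀'⟩, hD₁⟩
  | succ n ih =>
    obtain ⟨⟨hpos, hlt⟩, hD⟩ := ih
    have hfac : 0 < 1 - 4 / StripDenom x y a b (n + 1) := by
      rw [sub_pos, div_lt_one (by linarith)]
      exact hD
    have hy : 0 < y (n + 1) ∧ y (n + 1) < 1 := by
      rw [hrec.y_succ]
      refine ⟨mul_pos hpos hfac, mul_lt_one_of_nonneg_of_lt_one_left hpos.le hlt ?_⟩
      have : 0 < 4 / StripDenom x y a b (n + 1) := by positivity
      linarith
    have hS : 2 < 1 / (1 - y (n + 1)) + 1 / (1 + y (n + 1)) :=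
      (lt_one_div_one_sub_add_one_div_one_add_iff (by nlinarith)).mpr (by nlinarith)
    refine ⟨hy, ?_⟩
    rw [hrec.denom_succ n (by linarith) (by linarith)]
    linarith

end StripRec

/-- For `1/√3 < y₀ < 3/√19` and `hᵢ = 1 + α_{i+1} + β_{i+1}` (with `αᵢ = aᵢ − (2i−1)`,
`βᵢ = bᵢ − (2i−1)`), one has `h₀ > 2` and `2 < h_{i−1} < hᵢ` for all `i ≥ 1`;
in particular `(hᵢ)` is strictly increasing and bounded below by `2`. -/
theorem statement8 (x y a b : ℕ → ℝ)
    (hy0 : 1 / Real.sqrt 3 < y 0) (hy0' : y 0 < 3 / Real.sqrt 19)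
    (hrec : StripRec x y a b)
    (h : ℕ → ℝ)
    (hh : ∀ i : ℕ, h i = 1 + (a (i + 1) - (2 * ((i : ℝ) + 1) - 1)) +
      (b (i + 1) - (2 * ((i : ℝ) + 1) - 1))) :
    2 < h 0 ∧
    (∀ i : ℕ, 1 ≤ i → 2 < h (i - 1) ∧ h (i - 1) < h i) ∧
    StrictMono h ∧ (∀ i : ℕ, 2 < h i) := by
  have hy₀_pos : 0 < y 0 := lt_trans (by positivity) hy0
  have hy₀_lt : y 0 < 1 :=
    hy0'.trans ((div_lt_one (by positivity)).mpr ((Real.lt_sqrt (by norm_num)).mpr (by norm_num)))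
  have hy₀_sq : 1 / 3 < y 0 ^ 2 := by
    have h3 : (1 / Real.sqrt 3) ^ 2 = 1 / 3 := by rw [div_pow, Real.sq_sqrt (by norm_num)]; norm_num
    exact h3 ▸ pow_lt_pow_left₀ hy0 (by positivity) two_ne_zero
  have hS₀ : 3 < 1 / (1 - y 0) + 1 / (1 + y 0) :=
    (lt_one_div_one_sub_add_one_div_one_add_iff (by nlinarith)).mpr (by linarith)
  have hD₁ : 4 < StripDenom x y a b 1 := by
    rw [hrec.denom_one (by linarith) (by linarith)]
    linarith
  have h₀ : 2 < h 0 := by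
    rw [hh 0, hrec.2.1, hrec.2.2.1]
    linarith
  have hsucc (n : ℕ) : h n < h (n + 1) := by
    obtain ⟨hpos, hlt⟩ := (hrec.y_mem_Ioo_and_four_lt_denom hy₀_pos hy₀_lt hD₁ (n + 1)).1
    have hS : 2 < 1 / (1 - y (n + 1)) + 1 / (1 + y (n + 1)) :=
      (lt_one_div_one_sub_add_one_div_one_add_iff (by nlinarith)).mpr (by nlinarith)
    rw [hh, hh]
    push_cast
    linarith [hrec.add_succ n]
  have hmono : StrictMono h := strictMono_nat_of_lt_succ hsucc
  have hbound (i : ℕ) : 2 < h i := h₀.trans_le (hmono.monotone i.zero_le)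
  refine ⟨h₀, fun i hi => ?_, hmono, hbound⟩
  obtain ⟨j, rfl⟩ := Nat.exists_eq_add_of_le' hi
  exact ⟨hbound j, hsucc j⟩
end

section
/- Let 1/√3 < y₀ < 3/√19, let the sequences (xᵢ), (yᵢ), (aᵢ), (bᵢ) be defined by the strip recursion, with deviations αᵢ = aᵢ − (2i−1), βᵢ = bᵢ − (2i−1) and hᵢ = 1 + α_{i+1} + β_{i+1} for i ≥ 0. Then for every i ≥ 0 one has hᵢ ≤ 1 + ((10 − 4^{1−i})/3) · y₀²/(1 − y₀²). -/
noncomputable section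

lemma strip_alg (A B X Y0 Y1 D : ℝ) (hD : D = (A - X) * (1 + Y0) + (B - X) * (1 - Y0))
    (h1 : 1 - Y1 ≠ 0) (h2 : 1 + Y1 ≠ 0)
    (hY : Y1 = Y0 - 4 * Y0 / D) :
    (A + 2 / (1 - Y1) - (X + 2 - 2 * (A - B) * Y0 / D)) * (1 + Y1) +
      (B + 2 / (1 + Y1) - (X + 2 - 2 * (A - B) * Y0 / D)) * (1 - Y1) =
    D + 8 * Y1 ^ 2 / (1 - Y1 ^ 2) := by
  have hYd : Y1 - Y0 = -(4 * Y0 / D) := by rw [hY]; ring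
  have e1 : (A - X) * (1 + Y1) + (B - X) * (1 - Y1) = D - 4 * (A - B) * Y0 / D := by
    calc (A - X) * (1 + Y1) + (B - X) * (1 - Y1)
        = (A - X) * (1 + Y0) + (B - X) * (1 - Y0) + (A - B) * (Y1 - Y0) := by ring
      _ = D + (A - B) * (-(4 * Y0 / D)) := by rw [← hD, hYd]
      _ = D - 4 * (A - B) * Y0 / D := by ring
  have e2 : 2 / (1 - Y1) * (1 + Y1) + 2 / (1 + Y1) * (1 - Y1)
      = 4 + 8 * Y1 ^ 2 / (1 - Y1 ^ 2) := by
    have h3 : 1 - Y1 ^ 2 ≠ 0 := by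
      have e : 1 - Y1 ^ 2 = (1 - Y1) * (1 + Y1) := by ring
      rw [e]; exact mul_ne_zero h1 h2
    field_simp
    ring
  calc (A + 2 / (1 - Y1) - (X + 2 - 2 * (A - B) * Y0 / D)) * (1 + Y1) +
      (B + 2 / (1 + Y1) - (X + 2 - 2 * (A - B) * Y0 / D)) * (1 - Y1)
      = ((A - X) * (1 + Y1) + (B - X) * (1 - Y1)) +
        (2 / (1 - Y1) * (1 + Y1) + 2 / (1 + Y1) * (1 - Y1)) +
        (2 * (A - B) * Y0 / D - 2) * 2 := by ring
    _ = (D - 4 * (A - B) * Y0 / D) + (4 + 8 * Y1 ^ 2 / (1 - Y1 ^ 2)) +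
        (2 * (A - B) * Y0 / D - 2) * 2 := by rw [e1, e2]
    _ = D + 8 * Y1 ^ 2 / (1 - Y1 ^ 2) := by ring

set_option maxHeartbeats 1000000 in
lemma strip_master (x y a b : ℕ → ℝ)
    (hrec : StripRec x y a b)
    (hy0pos : 0 < y 0) (hy0sq1 : 1 / 3 < (y 0) ^ 2) (hy0sq2 : (y 0) ^ 2 < 9 / 19) :
    ∀ n : ℕ, 0 ≤ y n ∧ y n ≤ y 0 / 2 ^ n ∧
      4 ≤ StripDenom x y a b (n + 1) ∧
      StripDenom x y a b (n + 1) ≤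
        2 + 4 * ((y 0) ^ 2 / (1 - (y 0) ^ 2)) +
          8 / 3 * (1 - (1/4 : ℝ) ^ n) * ((y 0) ^ 2 / (1 - (y 0) ^ 2)) := by
  obtain ⟨hx0, ha1, hb1, hstep⟩ := hrec
  have hy0lt1 : y 0 < 1 := by nlinarith
  have hden : (0:ℝ) < 1 - (y 0) ^ 2 := by nlinarith
  set t := (y 0) ^ 2 / (1 - (y 0) ^ 2) with htdef
  have ht1 : 1 / 2 < t := by rw [htdef, lt_div_iff₀ hden]; nlinarith
  have ht2 : t < 9 / 10 := by rw [htdef, div_lt_iff₀ hden]; nlinarith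
  have htpos : 0 < t := by linarith
  intro n
  induction n with
  | zero =>
    have hD1 : StripDenom x y a b 1 = 2 + 4 * t := by
      unfold StripDenom
      norm_num
      rw [hx0, ha1, hb1, htdef]
      have h1 : (1 : ℝ) - y 0 ≠ 0 := by nlinarith
      have h2 : (1 : ℝ) + y 0 ≠ 0 := by nlinarith
      have h3 : (1 : ℝ) - (y 0) ^ 2 ≠ 0 := ne_of_gt hden
      field_simp
      ring
    refine ⟨le_of_lt hy0pos, by norm_num, ?_, ?_⟩
    · rw [hD1]; linarith
    · rw [hD1]; norm_num
  | succ n ih =>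
    obtain ⟨hyn0, hynle, hD4, hDu⟩ := ih
    have hynlt1 : y n < 1 := by
      have h2n : (1:ℝ) ≤ 2 ^ n := one_le_pow₀ (by norm_num : (1:ℝ) ≤ 2)
      have : y 0 / 2 ^ n ≤ y 0 := div_le_self (le_of_lt hy0pos) h2n
      linarith
    have hq : (0:ℝ) ≤ (1/4:ℝ) ^ n := by positivity
    have hq1 : ((1/4:ℝ)) ^ n ≤ 1 := pow_le_one₀ (by norm_num) (by norm_num)
    have hDlt8 : StripDenom x y a b (n + 1) < 8 := by nlinarith
    have hDpos : (0:ℝ) < StripDenom x y a b (n + 1) := by linarith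
    obtain ⟨hx', hy', ha', hb'⟩ := hstep (n + 1) (by omega)
    simp only [Nat.add_sub_cancel] at hx' hy'
    have hy1nonneg : 0 ≤ y (n + 1) := by
      rw [hy']
      have : 4 * y n / StripDenom x y a b (n + 1) ≤ y n := by
        rw [div_le_iff₀ hDpos]; nlinarith
      linarith
    have hy1half : y (n + 1) ≤ y n / 2 := by
      rw [hy']
      have : y n / 2 ≤ 4 * y n / StripDenom x y a b (n + 1) := by
        rw [le_div_iff₀ hDpos]; nlinarith
      linarith
    have hy1le : y (n + 1) ≤ y 0 / 2 ^ (n + 1) := by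
      have h2 : y n / 2 ≤ y 0 / 2 ^ n / 2 := by linarith
      calc y (n + 1) ≤ y n / 2 := hy1half
        _ ≤ y 0 / 2 ^ n / 2 := h2
        _ = y 0 / 2 ^ (n + 1) := by rw [div_div, ← pow_succ]
    have hy1lt1 : y (n + 1) < 1 := by linarith
    have h1ne : (1:ℝ) - y (n + 1) ≠ 0 := by nlinarith
    have h2ne : (1:ℝ) + y (n + 1) ≠ 0 := by nlinarith
    have hy1sqlt : (y (n + 1)) ^ 2 < 1 := by nlinarith
    have hDdef : StripDenom x y a b (n + 1) =
        (a (n + 1) - x n) * (1 + y n) + (b (n + 1) - x n) * (1 - y n) := by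
      unfold StripDenom
      simp only [Nat.add_sub_cancel]
    have hkey : StripDenom x y a b (n + 2) =
        StripDenom x y a b (n + 1) + 8 * (y (n + 1)) ^ 2 / (1 - (y (n + 1)) ^ 2) := by
      have e : StripDenom x y a b (n + 2) =
          (a (n + 2) - x (n + 1)) * (1 + y (n + 1)) +
          (b (n + 2) - x (n + 1)) * (1 - y (n + 1)) := by
        unfold StripDenom
        simp only [show n + 2 - 1 = n + 1 from rfl]
      rw [e, ha', hb', hx']
      exact strip_alg (a (n+1)) (b (n+1)) (x n) (y n) (y (n+1))
        (StripDenom x y a b (n + 1)) hDdef h1ne h2ne hy'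
    have hfracnn : 0 ≤ 8 * (y (n + 1)) ^ 2 / (1 - (y (n + 1)) ^ 2) := by
      apply div_nonneg (by positivity); nlinarith
    have hyb : (y (n + 1)) ^ 2 ≤ (y 0) ^ 2 / 4 ^ (n + 1) := by
      have hsq : (y (n + 1)) ^ 2 ≤ (y 0 / 2 ^ (n + 1)) ^ 2 :=
        pow_le_pow_left₀ hy1nonneg hy1le 2
      have he : (y 0 / 2 ^ (n + 1)) ^ 2 = (y 0) ^ 2 / 4 ^ (n + 1) := by
        rw [div_pow, ← pow_mul, mul_comm (n+1) 2, pow_mul]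
        norm_num
      linarith [hsq, le_of_eq he]
    have hy1le0 : (y (n + 1)) ^ 2 ≤ (y 0) ^ 2 := by
      have h4p : (1:ℝ) ≤ 4 ^ (n + 1) := one_le_pow₀ (by norm_num : (1:ℝ) ≤ 4)
      have := div_le_self (show (0:ℝ) ≤ (y 0) ^ 2 by positivity) h4p
      linarith
    have hfrac : (y (n + 1)) ^ 2 / (1 - (y (n + 1)) ^ 2) ≤ (1/4 : ℝ) ^ (n + 1) * t := by
      have hd2 : 1 - (y 0) ^ 2 ≤ 1 - (y (n + 1)) ^ 2 := by linarith
      have step1 : (y (n + 1)) ^ 2 / (1 - (y (n + 1)) ^ 2) ≤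
          ((y 0) ^ 2 / 4 ^ (n + 1)) / (1 - (y 0) ^ 2) :=
        div_le_div₀ (by positivity) hyb hden hd2
      have step2 : ((y 0) ^ 2 / 4 ^ (n + 1)) / (1 - (y 0) ^ 2) = (1/4 : ℝ) ^ (n + 1) * t := by
        rw [htdef, div_pow, one_pow]
        field_simp
        all_goals ring
      linarith [step1, le_of_eq step2]
    refine ⟨hy1nonneg, hy1le, ?_, ?_⟩
    · rw [hkey]; linarith
    · rw [hkey]
      have he8 : 8 * (y (n + 1)) ^ 2 / (1 - (y (n + 1)) ^ 2)
          = 8 * ((y (n + 1)) ^ 2 / (1 - (y (n + 1)) ^ 2)) := by ring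
      rw [he8]
      have h8 : 8 * ((y (n + 1)) ^ 2 / (1 - (y (n + 1)) ^ 2)) ≤ 8 * ((1/4:ℝ) ^ (n+1) * t) := by
        linarith
      have hBeq : 2 + 4 * t + 8 / 3 * (1 - (1/4 : ℝ) ^ n) * t + 8 * ((1/4:ℝ) ^ (n+1) * t)
          = 2 + 4 * t + 8 / 3 * (1 - (1/4 : ℝ) ^ (n+1)) * t := by
        rw [pow_succ]
        ring
      linarith [hDu, h8, le_of_eq hBeq]

set_option maxHeartbeats 1000000 in
/-- For `1/√3 < y₀ < 3/√19` and `hᵢ = 1 + α_{i+1} + β_{i+1}` one has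
`hᵢ ≤ 1 + ((10 − 4^{1−i})/3)·y₀²/(1 − y₀²)` for all `i ≥ 0`. -/
theorem statement9 (x y a b : ℕ → ℝ)
    (hy0 : 1 / Real.sqrt 3 < y 0) (hy0' : y 0 < 3 / Real.sqrt 19)
    (hrec : StripRec x y a b)
    (h : ℕ → ℝ)
    (hh : ∀ i : ℕ, h i = 1 + (a (i + 1) - (2 * ((i : ℝ) + 1) - 1)) +
      (b (i + 1) - (2 * ((i : ℝ) + 1) - 1))) :
    ∀ i : ℕ, h i ≤ 1 + ((10 - (4 : ℝ) ^ (1 - (i : ℤ))) / 3) * ((y 0) ^ 2 / (1 - (y 0) ^ 2)) := by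
  have h3pos : (0:ℝ) < Real.sqrt 3 := Real.sqrt_pos.mpr (by norm_num)
  have h19pos : (0:ℝ) < Real.sqrt 19 := Real.sqrt_pos.mpr (by norm_num)
  have hy0pos : 0 < y 0 := lt_trans (by positivity) hy0
  have hsq1 : (1 / Real.sqrt 3 : ℝ) ^ 2 = 1 / 3 := by
    rw [div_pow, one_pow, Real.sq_sqrt (by norm_num : (3:ℝ) ≥ 0)]
  have hsq2 : (3 / Real.sqrt 19 : ℝ) ^ 2 = 9 / 19 := by
    rw [div_pow, Real.sq_sqrt (by norm_num : (19:ℝ) ≥ 0)]; norm_num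
  have hy0sq1 : 1 / 3 < (y 0) ^ 2 := by
    rw [← hsq1]
    exact pow_lt_pow_left₀ hy0 (by positivity) (by norm_num)
  have hy0sq2 : (y 0) ^ 2 < 9 / 19 := by
    rw [← hsq2]
    exact pow_lt_pow_left₀ hy0' (le_of_lt hy0pos) (by norm_num)
  have hy0lt1 : y 0 < 1 := by nlinarith
  have hden : (0:ℝ) < 1 - (y 0) ^ 2 := by nlinarith
  have master := strip_master x y a b hrec hy0pos hy0sq1 hy0sq2
  obtain ⟨hx0, ha1, hb1, hstep⟩ := hrec
  set t := (y 0) ^ 2 / (1 - (y 0) ^ 2) with htdef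
  have htpos : 0 < t := by positivity
  have hfracall : ∀ n : ℕ, (y n) ^ 2 / (1 - (y n) ^ 2) ≤ (1/4 : ℝ) ^ n * t := by
    intro n
    obtain ⟨hyn0, hynle, -, -⟩ := master n
    have hsq : (y n) ^ 2 ≤ (y 0) ^ 2 / 4 ^ n := by
      have h1 : (y n) ^ 2 ≤ (y 0 / 2 ^ n) ^ 2 := pow_le_pow_left₀ hyn0 hynle 2
      have h2 : (y 0 / 2 ^ n) ^ 2 = (y 0) ^ 2 / 4 ^ n := by
        rw [div_pow, ← pow_mul, mul_comm n 2, pow_mul]; norm_num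
      linarith [h1, le_of_eq h2]
    have hle0 : (y n) ^ 2 ≤ (y 0) ^ 2 := by
      have h4p : (1:ℝ) ≤ 4 ^ n := one_le_pow₀ (by norm_num : (1:ℝ) ≤ 4)
      have := div_le_self (show (0:ℝ) ≤ (y 0) ^ 2 by positivity) h4p
      linarith
    have hd2 : 1 - (y 0) ^ 2 ≤ 1 - (y n) ^ 2 := by linarith
    have step1 : (y n) ^ 2 / (1 - (y n) ^ 2) ≤ ((y 0) ^ 2 / 4 ^ n) / (1 - (y 0) ^ 2) :=
      div_le_div₀ (by positivity) hsq hden hd2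
    have step2 : ((y 0) ^ 2 / 4 ^ n) / (1 - (y 0) ^ 2) = (1/4 : ℝ) ^ n * t := by
      rw [htdef, div_pow, one_pow]; field_simp; all_goals ring
    linarith [step1, le_of_eq step2]
  have hzpow : ∀ i : ℕ, (4:ℝ) ^ (1 - (i:ℤ)) = 4 / 4 ^ i := by
    intro i
    rw [zpow_sub₀ (by norm_num : (4:ℝ) ≠ 0), zpow_one, zpow_natCast]
  intro i
  rw [hzpow]
  induction i with
  | zero =>
    have h1 : (1:ℝ) - y 0 ≠ 0 := by nlinarith
    have h2 : (1:ℝ) + y 0 ≠ 0 := by nlinarith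
    have hh0 : h 0 = a 1 + b 1 - 1 := by
      have := hh 0
      push_cast at this
      linarith
    rw [hh0, ha1, hb1]
    have he : 1 / (1 - y 0) + 1 / (1 + y 0) - 1 = 1 + 2 * t := by
      rw [htdef]
      field_simp
      ring
    rw [he]
    norm_num
  | succ n ih =>
    obtain ⟨-, -, ha', hb'⟩ := hstep (n + 1) (by omega)
    have hyn1 : 0 ≤ y (n + 1) := (master (n+1)).1
    have hyn1lt : y (n + 1) < 1 := by
      obtain ⟨h0, hle, -, -⟩ := master (n + 1)
      have h2n : (1:ℝ) ≤ 2 ^ (n+1) := one_le_pow₀ (by norm_num : (1:ℝ) ≤ 2)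
      have : y 0 / 2 ^ (n+1) ≤ y 0 := div_le_self (le_of_lt hy0pos) h2n
      linarith
    have h1ne : (1:ℝ) - y (n + 1) ≠ 0 := by nlinarith
    have h2ne : (1:ℝ) + y (n + 1) ≠ 0 := by nlinarith
    have h3ne : (1:ℝ) - (y (n + 1)) ^ 2 ≠ 0 := by nlinarith
    have e3 : 2 / (1 - y (n+1)) + 2 / (1 + y (n+1))
        = 4 + 4 * ((y (n+1)) ^ 2 / (1 - (y (n+1)) ^ 2)) := by
      field_simp
      ring
    have hstepval : h (n + 1) = h n + (2 / (1 - y (n+1)) + 2 / (1 + y (n+1))) - 4 := by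
      rw [hh (n + 1), hh n, ha', hb']
      push_cast
      ring
    rw [hstepval, e3]
    have hfr := hfracall (n + 1)
    have hb4 : 4 * ((y (n+1)) ^ 2 / (1 - (y (n+1)) ^ 2)) ≤ 4 * ((1/4:ℝ) ^ (n+1) * t) := by
      linarith
    have hco : 1 + (10 - 4 / 4 ^ n) / 3 * t + 4 * ((1/4:ℝ) ^ (n+1) * t)
        = 1 + (10 - 4 / 4 ^ (n+1)) / 3 * t := by
      have h4n : (4:ℝ) ^ n ≠ 0 := by positivity
      have h4n1 : (4:ℝ) ^ (n+1) ≠ 0 := by positivity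
      rw [pow_succ, pow_succ]
      rw [one_div_pow]
      field_simp
      all_goals ring
    linarith [ih, hb4, le_of_eq hco]
end
end

section
/- Let 1/√3 < y₀ < 3/√19 and let the sequences (xᵢ), (yᵢ), (aᵢ), (bᵢ) be defined by the strip recursion. Then for every i ≥ 1 one has 0 < yᵢ < 2^{−i}·y₀; in particular the sequence (yᵢ)ᵢ≥₀ is positive, strictly decreasing, and converges to 0. -/
noncomputable section

set_option maxHeartbeats 1000000 in
lemma strip_key (A B X Y d x' y' : ℝ) (hd0 : d ≠ 0) (h1 : 1 - y' ≠ 0) (h2 : 1 + y' ≠ 0)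
    (hd : d = (A - X)*(1+Y) + (B - X)*(1-Y))
    (hy' : y' = Y - 4*Y/d)
    (hx' : x' = X + 2 - 2*(A-B)*Y/d) :
    (A + 2/(1-y') - x')*(1+y') + (B + 2/(1+y') - x')*(1-y') = d + 8*y'^2/(1-y'^2) := by
  have hyd : y'*d = Y*d - 4*Y := by rw [hy']; field_simp
  have hxd : x'*d = X*d + 2*d - 2*(A-B)*Y := by rw [hx']; field_simp
  have hE : A + B - 2*x' + (A-B)*y' = d - 4 := by
    have h : (A + B - 2*x' + (A-B)*y')*d = (d-4)*d := by
      linear_combination (A-B)*hyd - 2*hxd - d*hd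
    exact mul_right_cancel₀ hd0 h
  have hfrac : 2/(1-y')*(1+y') + 2/(1+y')*(1-y') = 4 + 8*y'^2/(1-y'^2) := by
    have h3 : 1 - y'^2 ≠ 0 := by
      rw [show (1:ℝ)-y'^2 = (1-y')*(1+y') by ring]; exact mul_ne_zero h1 h2
    field_simp
    ring
  linear_combination hE + hfrac

set_option maxHeartbeats 1000000 in
/-- For `1/√3 < y₀ < 3/√19` one has `0 < yᵢ < 2^{−i}·y₀` for all `i ≥ 1`; in particular
the sequence `(yᵢ)` is positive, strictly decreasing and converges to `0`. -/
theorem statement10 (x y a b : ℕ → ℝ)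
    (hy0 : 1 / Real.sqrt 3 < y 0) (hy0' : y 0 < 3 / Real.sqrt 19)
    (hrec : StripRec x y a b) :
    (∀ i : ℕ, 1 ≤ i → 0 < y i ∧ y i < (2 : ℝ) ^ (-(i : ℤ)) * y 0) ∧
    (∀ i : ℕ, 0 < y i) ∧ StrictAnti y ∧
    Filter.Tendsto y Filter.atTop (nhds 0) := by
  obtain ⟨hx0, ha1, hb1, hstep⟩ := hrec
  have s3 : Real.sqrt 3 ^ 2 = 3 := Real.sq_sqrt (by norm_num)
  have s3pos : 0 < Real.sqrt 3 := Real.sqrt_pos.mpr (by norm_num)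
  have s19 : Real.sqrt 19 ^ 2 = 19 := Real.sq_sqrt (by norm_num)
  have s19pos : 0 < Real.sqrt 19 := Real.sqrt_pos.mpr (by norm_num)
  have hy0pos : 0 < y 0 := lt_trans (by positivity) hy0
  have h1lt : 1 < y 0 * Real.sqrt 3 := by rw [div_lt_iff₀ s3pos] at hy0; linarith
  have hsq3 : 1/3 < (y 0)^2 := by
    nlinarith [mul_self_lt_mul_self (by norm_num : (0:ℝ) ≤ 1) h1lt, s3, s3pos]
  have h2lt : y 0 * Real.sqrt 19 < 3 := by rw [lt_div_iff₀ s19pos] at hy0'; linarith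
  have hsq19 : (y 0)^2 < 9/19 := by
    nlinarith [mul_self_lt_mul_self (by positivity : (0:ℝ) ≤ y 0 * Real.sqrt 19) h2lt, s19]
  have hy0lt1 : y 0 < 1 := by nlinarith
  -- recursion in convenient form
  have hyrec : ∀ n : ℕ, y (n+1) = y n - 4 * y n / StripDenom x y a b (n+1) := by
    intro n
    have h := (hstep (n+1) (by omega)).2.1
    simpa using h
  have hxrec : ∀ n : ℕ,
      x (n+1) = x n + 2 - 2 * (a (n+1) - b (n+1)) * y n / StripDenom x y a b (n+1) := by
    intro n
    have h := (hstep (n+1) (by omega)).1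
    simpa using h
  have hDexp : ∀ n : ℕ, StripDenom x y a b (n+1)
      = (a (n+1) - x n)*(1 + y n) + (b (n+1) - x n)*(1 - y n) := by
    intro n; simp [StripDenom]
  -- key identity
  have hident : ∀ n : ℕ, 1 ≤ n → StripDenom x y a b n ≠ 0 → 1 - y n ≠ 0 → 1 + y n ≠ 0 →
      StripDenom x y a b (n+1) = StripDenom x y a b n + 8*(y n)^2/(1 - (y n)^2) := by
    intro n hn hd0 h1 h2
    obtain ⟨m, rfl⟩ : ∃ m, n = m+1 := ⟨n-1, by omega⟩
    rw [hDexp (m+1), (hstep (m+1) (by omega)).2.2.1, (hstep (m+1) (by omega)).2.2.2]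
    exact strip_key (a (m+1)) (b (m+1)) (x m) (y m) (StripDenom x y a b (m+1))
      (x (m+1)) (y (m+1)) hd0 h1 h2 (hDexp m) (hyrec m) (hxrec m)
  -- D 1
  have hne1 : (1:ℝ) - y 0 ≠ 0 := ne_of_gt (by linarith)
  have hne2 : (1:ℝ) + y 0 ≠ 0 := ne_of_gt (by linarith)
  have h1msq0 : (0:ℝ) < 1 - (y 0)^2 := by nlinarith
  have hne3 : (1:ℝ) - (y 0)^2 ≠ 0 := ne_of_gt h1msq0
  have hD1 : StripDenom x y a b 1 = 2*(1+(y 0)^2)/(1-(y 0)^2) := by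
    have h := hDexp 0
    rw [hx0, ha1, hb1] at h
    rw [h]
    rw [eq_div_iff hne3]
    field_simp
    ring
  have hD1gt : 4 < StripDenom x y a b 1 := by
    rw [hD1, lt_div_iff₀ h1msq0]; nlinarith
  have hD1lt : StripDenom x y a b 1 < 28/5 := by
    rw [hD1, div_lt_iff₀ h1msq0]; nlinarith
  -- main induction
  have key : ∀ n : ℕ, 1 ≤ n → 0 < y n ∧ y n < (2:ℝ)^(-(n:ℤ)) * y 0 ∧
      4 < StripDenom x y a b n ∧
      StripDenom x y a b n < 8 - 48/5 * (4:ℝ)^(-(n:ℤ)) := by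
    intro n hn
    induction n, hn using Nat.le_induction with
    | base =>
      have hD1pos : 0 < StripDenom x y a b 1 := by linarith
      have hfr : 4 * y 0 / StripDenom x y a b 1 < y 0 := by
        rw [div_lt_iff₀ hD1pos]; nlinarith
      have hfr2 : y 0 / 2 < 4 * y 0 / StripDenom x y a b 1 := by
        rw [div_lt_div_iff₀ (by norm_num) hD1pos]; nlinarith
      have h21 : (2:ℝ)^(-((1:ℕ):ℤ)) = 1/2 := by norm_num
      have h41 : (4:ℝ)^(-((1:ℕ):ℤ)) = 1/4 := by norm_num
      refine ⟨?_, ?_, hD1gt, ?_⟩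
      · rw [hyrec 0]; linarith
      · rw [hyrec 0, h21]; linarith
      · rw [h41]; linarith
    | succ n hn ih =>
      obtain ⟨hyp, hyb, hDl, hDu⟩ := ih
      have hp2 : (0:ℝ) < (2:ℝ)^(-(n:ℤ)) := by positivity
      have hp4 : (0:ℝ) < (4:ℝ)^(-(n:ℤ)) := by positivity
      have h2le1 : (2:ℝ)^(-(n:ℤ)) ≤ 1 := by
        apply zpow_le_one_of_nonpos₀ (by norm_num : (1:ℝ) ≤ 2)
        omega
      have hyny0 : y n < y 0 :=
        lt_of_lt_of_le hyb (mul_le_of_le_one_left hy0pos.le h2le1)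
      have hylt1 : y n < 1 := by linarith
      have hDn0 : StripDenom x y a b n ≠ 0 := ne_of_gt (by linarith)
      have hid := hident n hn hDn0 (ne_of_gt (by linarith)) (ne_of_gt (by linarith))
      have h24 : (4:ℝ)^(-(n:ℤ)) = (2:ℝ)^(-(n:ℤ)) * (2:ℝ)^(-(n:ℤ)) := by
        rw [show (4:ℝ) = 2*2 by norm_num, mul_zpow]
      have hm := mul_lt_mul'' hyb hyb hyp.le hyp.le
      have hsqn : (y n)^2 < (4:ℝ)^(-(n:ℤ)) * (9/19) := by
        have he : ((2:ℝ)^(-(n:ℤ)) * y 0)*((2:ℝ)^(-(n:ℤ)) * y 0)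
            = (4:ℝ)^(-(n:ℤ)) * (y 0)^2 := by rw [h24]; ring
        have hmm : (y n)^2 < (4:ℝ)^(-(n:ℤ)) * (y 0)^2 := by
          rw [pow_two]; rw [he] at hm; exact hm
        linarith [mul_lt_mul_of_pos_left hsq19 hp4]
      have h1msq : (10:ℝ)/19 < 1 - (y n)^2 := by nlinarith
      have hinc : 8*(y n)^2/(1-(y n)^2) < 36/5 * (4:ℝ)^(-(n:ℤ)) := by
        rw [div_lt_iff₀ (by linarith)]
        nlinarith [mul_lt_mul_of_pos_left h1msq (by linarith : (0:ℝ) < 36/5 * (4:ℝ)^(-(n:ℤ)))]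
      have hincpos : (0:ℝ) ≤ 8*(y n)^2/(1-(y n)^2) := by positivity
      have hDs1 : 4 < StripDenom x y a b (n+1) := by rw [hid]; linarith
      have hc4 : (-(((n+1):ℕ):ℤ)) = -(n:ℤ) + (-1) := by push_cast; ring
      have h4s : (4:ℝ)^(-(((n+1):ℕ):ℤ)) = (4:ℝ)^(-(n:ℤ)) * (1/4) := by
        rw [hc4, zpow_add₀ (by norm_num : (4:ℝ) ≠ 0)]; norm_num
      have h2s : (2:ℝ)^(-(((n+1):ℕ):ℤ)) = (2:ℝ)^(-(n:ℤ)) * (1/2) := by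
        rw [hc4, zpow_add₀ (by norm_num : (2:ℝ) ≠ 0)]; norm_num
      have hDs2 : StripDenom x y a b (n+1) < 8 - 48/5 * (4:ℝ)^(-(((n+1):ℕ):ℤ)) := by
        rw [h4s, hid]; linarith
      have hD8 : StripDenom x y a b (n+1) < 8 := by
        have : (0:ℝ) < (4:ℝ)^(-(((n+1):ℕ):ℤ)) := by positivity
        linarith
      have hDp : 0 < StripDenom x y a b (n+1) := by linarith
      have ha' : 4 * y n / StripDenom x y a b (n+1) < y n := by
        rw [div_lt_iff₀ hDp]; nlinarith
      have hb' : y n / 2 < 4 * y n / StripDenom x y a b (n+1) := by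
        rw [div_lt_div_iff₀ (by norm_num) hDp]; nlinarith
      refine ⟨?_, ?_, hDs1, hDs2⟩
      · rw [hyrec n]; linarith
      · rw [hyrec n, h2s]
        have hhalf : (2:ℝ)^(-(n:ℤ)) * (1/2) * y 0 = ((2:ℝ)^(-(n:ℤ)) * y 0) / 2 := by ring
        rw [hhalf]
        linarith
  have hpos : ∀ i : ℕ, 0 < y i := by
    intro i
    cases i with
    | zero => exact hy0pos
    | succ n => exact (key (n+1) (by omega)).1
  refine ⟨fun i hi => ⟨(key i hi).1, (key i hi).2.1⟩, hpos, ?_, ?_⟩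
  · apply strictAnti_nat_of_succ_lt
    intro n
    have hDgt : 4 < StripDenom x y a b (n+1) := (key (n+1) (by omega)).2.2.1
    have h : 0 < 4 * y n / StripDenom x y a b (n+1) :=
      div_pos (by linarith [hpos n]) (by linarith)
    rw [hyrec n]; linarith
  · have hb0 : Filter.Tendsto (fun n : ℕ => (2:ℝ)^(-(n:ℤ)) * y 0) Filter.atTop (nhds 0) := by
      have h := (tendsto_pow_atTop_nhds_zero_of_lt_one (by norm_num : (0:ℝ) ≤ 1/2)
        (by norm_num : (1:ℝ)/2 < 1)).mul_const (y 0)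
      rw [zero_mul] at h
      refine h.congr fun n => ?_
      rw [one_div, inv_pow, ← zpow_natCast (2:ℝ) n, ← zpow_neg]
    exact squeeze_zero' (Filter.Eventually.of_forall fun n => (hpos n).le)
      (Filter.eventually_atTop.mpr ⟨1, fun n hn => ((key n hn).2.1).le⟩) hb0
end
end

section
/- Let 1/√3 < y₀ < 3/√19, let the sequences (xᵢ), (yᵢ), (aᵢ), (bᵢ) be defined by the strip recursion, and let αᵢ = aᵢ − (2i−1) for i ≥ 1. Then for every i ≥ 1 one has |αᵢ| ≤ 4y₀/(1 − y₀). -/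
noncomputable section

/-- Key algebraic identity: `D_{i+1} = D_i + 8y_i²/(1−y_i²)`. -/
theorem stripDenom_step_aux (A B X P D Y : ℝ) (hD : D = (A - X)*(1+P) + (B - X)*(1-P))
    (hY : Y = P - 4*P/D)
    (h1 : (1:ℝ) - Y ≠ 0) (h2 : (1:ℝ) + Y ≠ 0) :
    (A + 2/(1-Y) - (X + 2 - 2*(A-B)*P/D))*(1+Y)
      + (B + 2/(1+Y) - (X + 2 - 2*(A-B)*P/D))*(1-Y)
      = D + 8*Y^2/(1-Y^2) := by
  have h4 : 4*P/D = P - Y := by rw [hY]; ring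
  have key : 4*(A-B)*P/D + (A-B)*Y = (A-B)*P := by
    calc 4*(A-B)*P/D + (A-B)*Y = (A-B)*(4*P/D) + (A-B)*Y := by ring
      _ = (A-B)*(P-Y) + (A-B)*Y := by rw [h4]
      _ = (A-B)*P := by ring
  have e1 : (2/(1-Y))*(1+Y) + (2/(1+Y))*(1-Y) = 4 + 8*Y^2/(1-Y^2) := by
    have h3 : (1:ℝ) - Y^2 ≠ 0 := by
      intro h; exact (mul_ne_zero h1 h2) (by linear_combination h)
    field_simp
    ring
  calc (A + 2/(1-Y) - (X + 2 - 2*(A-B)*P/D))*(1+Y)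
      + (B + 2/(1+Y) - (X + 2 - 2*(A-B)*P/D))*(1-Y)
      = ((A+B-2*X-4) + 4*(A-B)*P/D + (A-B)*Y)
        + ((2/(1-Y))*(1+Y) + (2/(1+Y))*(1-Y)) := by ring
    _ = ((A+B-2*X-4) + 4*(A-B)*P/D + (A-B)*Y) + (4 + 8*Y^2/(1-Y^2)) := by rw [e1]
    _ = D + 8*Y^2/(1-Y^2) := by linear_combination key - hD

/-- Base-case numeric inequalities. -/
theorem strip_base_ineq (t w : ℝ) (ht : 0 < t) (hA : 1/3 < t^2) (hB : t^2 < 9/19)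
    (hk : w * (1 + t^2) = t * (3*t^2 - 1)) :
    0 < w ∧ 3*w ≤ t ∧ 4 < (2 + 2*t^2)/(1 - t^2) ∧
      (2 + 2*t^2)/(1 - t^2) + 10*w^2 ≤ 6 := by
  have h1mt2 : (0:ℝ) < 1 - t^2 := by nlinarith
  have h1pt2 : (0:ℝ) < 1 + t^2 := by positivity
  have hwpos : 0 < w := by
    nlinarith [hk, mul_pos ht (show (0:ℝ) < 3*t^2 - 1 by linarith)]
  have h3w : 3*w ≤ t := by
    nlinarith [hk, mul_pos ht ht, sq_nonneg t]
  refine ⟨hwpos, h3w, ?_, ?_⟩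
  · rw [lt_div_iff₀ h1mt2]; nlinarith
  · have hk2 : w^2 * (1+t^2)^2 = t^2 * (3*t^2-1)^2 := by
      linear_combination (w * (1+t^2) + t*(3*t^2-1)) * hk
    have hpoly : 0 ≤ 90*(t^2)^4 - 158*(t^2)^3 + 58*(t^2)^2 - 10*t^2 + 4 := by
      nlinarith [mul_nonneg (sub_nonneg.2 hA.le) (sub_nonneg.2 hB.le),
        sq_nonneg (t^2 - 9/19), sq_nonneg (t^2 - 1/3),
        mul_nonneg (mul_nonneg (sub_nonneg.2 hA.le) (sub_nonneg.2 hB.le)) (sub_nonneg.2 hB.le)]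
    have hfin : (2 + 2*t^2) * (1+t^2)^2 ≤ (6 - 10*w^2) * ((1 - t^2) * (1+t^2)^2) := by
      have h10 : 10*(1-t^2)*(w^2*(1+t^2)^2) = 10*(1-t^2)*(t^2*(3*t^2-1)^2) := by rw [hk2]
      linarith [hpoly, h10]
    have hgoal : (2 + 2*t^2)/(1 - t^2) ≤ 6 - 10*w^2 := by
      rw [div_le_iff₀ h1mt2]
      have hp : (0:ℝ) < (1+t^2)^2 := by positivity
      nlinarith [hfin]
    linarith

/-- Successor-step numeric inequalities. -/
theorem strip_succ_ineq (Y D Dn W : ℝ) (hY0 : 0 < Y) (hYq : Y ≤ 1/4)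
    (hD4 : 4 < D) (hD6 : D + 10*Y^2 ≤ 6)
    (hDn : Dn = D + 8*Y^2/(1-Y^2))
    (hkey : W * Dn = Y * (Dn - 4)) :
    0 < W ∧ W ≤ 1/4 ∧ 4 < Dn ∧ Dn + 10*W^2 ≤ 6 ∧ 3*W ≤ Y := by
  have h1my2 : (0:ℝ) < 1 - Y^2 := by nlinarith
  have hinc0 : 0 ≤ 8*Y^2/(1-Y^2) := by positivity
  have hincle : 8*Y^2/(1-Y^2) ≤ 10*Y^2 := by
    rw [div_le_iff₀ h1my2]; nlinarith
  have hDn4 : 4 < Dn := by rw [hDn]; linarith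
  have hDn6 : Dn ≤ 6 := by rw [hDn]; nlinarith [sq_nonneg Y]
  have hDnpos : (0:ℝ) < Dn := by linarith
  have hW0 : 0 < W := by
    nlinarith [hkey, mul_pos hY0 (show (0:ℝ) < Dn - 4 by linarith)]
  have h3W : 3*W ≤ Y := by
    nlinarith [hkey, mul_nonneg hY0.le (show (0:ℝ) ≤ 6 - Dn by linarith)]
  have hWq : W ≤ 1/4 := by linarith
  refine ⟨hW0, hWq, hDn4, ?_, h3W⟩
  have hsq : W^2 ≤ Y^2/9 := by nlinarith
  have hsq16 : Y^2 ≤ 1/16 := by nlinarith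
  have hincle2 : 8*Y^2/(1-Y^2) ≤ 80*Y^2/9 := by
    rw [div_le_div_iff₀ h1my2 (by norm_num)]
    nlinarith [hsq16, sq_nonneg Y]
  rw [hDn]; nlinarith

/-- α-step fraction bounds. -/
theorem strip_alpha_ineq (Y : ℝ) (h0 : 0 < Y) (hq : Y ≤ 1/4) :
    0 < 2*Y/(1-Y) ∧ 2*Y/(1-Y) ≤ 8/3*Y := by
  have h1 : (0:ℝ) < 1 - Y := by linarith
  constructor
  · positivity
  · rw [div_le_iff₀ h1]; nlinarith

set_option maxHeartbeats 1000000 in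
/-- For `1/√3 < y₀ < 3/√19` and `αᵢ = aᵢ − (2i−1)` one has `|αᵢ| ≤ 4y₀/(1 − y₀)`. -/
theorem statement11 (x y a b : ℕ → ℝ)
    (hy0 : 1 / Real.sqrt 3 < y 0) (hy0' : y 0 < 3 / Real.sqrt 19)
    (hrec : StripRec x y a b) :
    ∀ i : ℕ, 1 ≤ i → |a i - (2 * (i : ℝ) - 1)| ≤ 4 * y 0 / (1 - y 0) := by
  obtain ⟨hx0, ha1, hb1, hstep⟩ := hrec
  -- basic facts about y 0
  have h3p : (0:ℝ) < Real.sqrt 3 := Real.sqrt_pos.2 (by norm_num)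
  have ht : 0 < y 0 := lt_trans (by positivity) hy0
  have htA : 1/3 < (y 0)^2 := by
    have h := pow_lt_pow_left₀ hy0 (by positivity) (n := 2) (by norm_num)
    calc (1:ℝ)/3 = (1/Real.sqrt 3)^2 := by
          rw [div_pow, one_pow, Real.sq_sqrt] ; norm_num
      _ < (y 0)^2 := h
  have htB : (y 0)^2 < 9/19 := by
    have h := pow_lt_pow_left₀ hy0' ht.le (n := 2) (by norm_num)
    calc (y 0)^2 < (3/Real.sqrt 19)^2 := h
      _ = 9/19 := by rw [div_pow, Real.sq_sqrt] <;> norm_num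
  have ht1 : y 0 < 1 := by nlinarith [htB]
  have h1mt : (0:ℝ) < 1 - y 0 := by linarith
  have h1pt : (0:ℝ) < 1 + y 0 := by linarith
  have hne1 : (1:ℝ) - y 0 ≠ 0 := ne_of_gt h1mt
  have hne2 : (1:ℝ) + y 0 ≠ 0 := ne_of_gt h1pt
  have h1mt2 : (0:ℝ) < 1 - (y 0)^2 := by nlinarith [ht1, ht]
  have h1pt2 : (0:ℝ) < 1 + (y 0)^2 := by positivity
  have hne3 : (1:ℝ) - (y 0)^2 ≠ 0 := ne_of_gt h1mt2
  have hne4 : (1:ℝ) + (y 0)^2 ≠ 0 := ne_of_gt h1pt2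
  clear hy0 hy0' h3p
  -- the main invariant
  have key : ∀ i : ℕ, 1 ≤ i →
      0 < y i ∧ y i ≤ 1/4 ∧ 4 < StripDenom x y a b i ∧
      StripDenom x y a b i + 10*(y i)^2 ≤ 6 ∧
      y 0 / (1 - y 0) ≤ a i - (2*(i:ℝ) - 1) ∧
      a i - (2*(i:ℝ) - 1) + 4 * y i ≤ 4 * y 0 / (1 - y 0) := by
    intro i hi
    induction i, hi using Nat.le_induction with
    | base =>
      have hD1 : StripDenom x y a b 1 = (2 + 2*(y 0)^2)/(1 - (y 0)^2) := by
        show (a 1 - x 0) * (1 + y 0) + (b 1 - x 0) * (1 - y 0) = _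
        rw [hx0, ha1, hb1]
        field_simp
        ring
      have hy1 := (hstep 1 le_rfl).2.1
      norm_num at hy1
      have hy1c : y 1 = y 0 * (3*(y 0)^2 - 1)/(1 + (y 0)^2) := by
        rw [hy1, hD1]
        have h2 : (2 + 2*(y 0)^2) ≠ 0 := by positivity
        field_simp
        ring
      have hk : y 1 * (1 + (y 0)^2) = y 0 * (3*(y 0)^2 - 1) := by
        rw [hy1c]; field_simp
      obtain ⟨hy1pos, hy13, hD1gt, hD1le⟩ := strip_base_ineq (y 0) (y 1) ht htA htB hk
      have hy1q : y 1 ≤ 1/4 := by nlinarith [htB, hy13, ht]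
      rw [← hD1] at hD1gt hD1le
      have hα : a 1 - (2*((1:ℕ):ℝ) - 1) = y 0 / (1 - y 0) := by
        rw [ha1]; push_cast; field_simp; ring
      refine ⟨hy1pos, hy1q, hD1gt, hD1le, le_of_eq hα.symm, ?_⟩
      rw [hα]
      have h₁ : 3 * y 0 ≤ 3 * y 0 / (1 - y 0) := by
        rw [le_div_iff₀ h1mt]
        linarith [sq_nonneg (y 0), mul_pos ht ht]
      have h₂ : 4 * y 0 / (1 - y 0) = y 0 / (1 - y 0) + 3 * y 0 / (1 - y 0) := by ring
      linarith [hy13, ht]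
    | succ n hn ih =>
      obtain ⟨hyn, hynq, hDn, hDn6, hαlo, hαhi⟩ := ih
      have h1my : (0:ℝ) < 1 - y n := by linarith
      have h1py : (0:ℝ) < 1 + y n := by linarith
      have h1my2 : (0:ℝ) < 1 - (y n)^2 := by
        have h := pow_le_pow_left₀ hyn.le hynq 2
        norm_num at h
        linarith
      obtain ⟨hx_n, hy_n, ha_n, hb_n⟩ := hstep n hn
      obtain ⟨hx_n1, hy_n1, ha_n1, hb_n1⟩ := hstep (n+1) (by omega)
      simp only [Nat.add_sub_cancel] at hx_n1 hy_n1
      -- the denominator identity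
      have hDid : StripDenom x y a b (n+1)
          = StripDenom x y a b n + 8*(y n)^2/(1 - (y n)^2) := by
        have hexp : StripDenom x y a b (n+1)
            = (a (n+1) - x n) * (1 + y n) + (b (n+1) - x n) * (1 - y n) := by
          simp [StripDenom]
        rw [hexp, ha_n, hb_n, hx_n]
        exact stripDenom_step_aux (a n) (b n) (x (n-1)) (y (n-1)) _ (y n) rfl hy_n
          (ne_of_gt h1my) (ne_of_gt h1py)
      set D := StripDenom x y a b n with hDdef
      set Dn := StripDenom x y a b (n+1) with hDndef
      have hDn1gt : 4 < Dn := by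
        rw [hDid]
        have h0 : 0 ≤ 8*(y n)^2/(1 - (y n)^2) := by positivity
        linarith
      have hDnne : Dn ≠ 0 := by intro h; rw [h] at hDn1gt; linarith
      have hykey : y (n+1) * Dn = y n * (Dn - 4) := by
        rw [hy_n1]; field_simp
      obtain ⟨hy1pos, hy1q, hDn4, hDnfull, hy13⟩ :=
        strip_succ_ineq (y n) D Dn (y (n+1)) hyn hynq hDn hDn6 hDid hykey
      -- α step
      obtain ⟨hfracpos, hfracle⟩ := strip_alpha_ineq (y n) hyn hynq
      have hcast : (2*((n+1:ℕ):ℝ) - 1) = (2*(n:ℝ) - 1) + 2 := by push_cast; ring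
      have hfrac : 2/(1 - y n) - 2 = 2 * y n / (1 - y n) := by
        field_simp
        ring
      have hα1 : a (n+1) - (2*((n+1:ℕ):ℝ) - 1)
          = (a n - (2*(n:ℝ) - 1)) + 2 * y n / (1 - y n) := by
        rw [ha_n, hcast, ← hfrac]; ring
      refine ⟨hy1pos, hy1q, hDn4, hDnfull, ?_, ?_⟩
      · rw [hα1]; linarith
      · rw [hα1]; linarith
  -- conclusion
  intro i hi
  obtain ⟨hyi, _, _, _, hαlo, hαhi⟩ := key i hi
  have hB : 0 < 4 * y 0 / (1 - y 0) := by positivity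
  have hlo : 0 < y 0 / (1 - y 0) := by positivity
  rw [abs_le]
  constructor
  · linarith
  · linarith
end
end

section
/- Let 1/√3 < y₀ < 3/√19, let the sequences (xᵢ), (yᵢ), (aᵢ), (bᵢ) be defined by the strip recursion, and let βᵢ = bᵢ − (2i−1) for i ≥ 1. Then for every i ≥ 1 one has |βᵢ| ≤ 4y₀. -/
noncomputable section

/-- Pure field identity behind the key denominator recursion
`D_{i+1} = D_i + 8 y_i² / (1 − y_i²)`. -/
lemma denom_key (A B Y yp : ℝ) (h1 : 1 - yp ≠ 0) (h2 : 1 + yp ≠ 0) :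
    (A - 2 + (A-B)*(Y-yp)/2 + 2/(1-yp))*(1+yp)
      + (B - 2 + (A-B)*(Y-yp)/2 + 2/(1+yp))*(1-yp)
      = (A*(1+Y)+B*(1-Y)) + 8*yp^2/(1-yp^2) := by
  have h12 : 1 - yp^2 = (1-yp)*(1+yp) := by ring
  rw [h12]
  field_simp
  ring

set_option maxHeartbeats 1600000 in
/-- For `1/√3 < y₀ < 3/√19` and `βᵢ = bᵢ − (2i−1)` one has `|βᵢ| ≤ 4y₀`. -/
theorem statement12 (x y a b : ℕ → ℝ)
    (hy0 : 1 / Real.sqrt 3 < y 0) (hy0' : y 0 < 3 / Real.sqrt 19)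
    (hrec : StripRec x y a b) :
    ∀ i : ℕ, 1 ≤ i → |b i - (2 * (i : ℝ) - 1)| ≤ 4 * y 0 := by
  obtain ⟨hx0, ha1, hb1, hstep⟩ := hrec
  obtain ⟨c, hc⟩ : ∃ c, y 0 = c := ⟨y 0, rfl⟩
  rw [hc] at hy0 hy0' ha1 hb1 ⊢
  -- numeric facts about c
  have hs3pos : 0 < Real.sqrt 3 := Real.sqrt_pos.mpr (by norm_num)
  have hs3 : Real.sqrt 3 ^ 2 = 3 := Real.sq_sqrt (by norm_num)
  have hs19pos : 0 < Real.sqrt 19 := Real.sqrt_pos.mpr (by norm_num)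
  have hs19 : Real.sqrt 19 ^ 2 = 19 := Real.sq_sqrt (by norm_num)
  have hc0 : 0 < c := lt_trans (by positivity) hy0
  have hA : 1 < c * Real.sqrt 3 := (div_lt_iff₀ hs3pos).mp hy0
  have hc3 : 1/3 < c^2 := by nlinarith [sq_nonneg (c * Real.sqrt 3 - 1)]
  have hB : c * Real.sqrt 19 < 3 := (lt_div_iff₀ hs19pos).mp hy0'
  have hc19 : c^2 < 9/19 := by
    nlinarith [mul_pos (mul_pos hc0 hs19pos) (by linarith : (0:ℝ) < 3 - c * Real.sqrt 19)]
  have hc1 : c < 1 := by nlinarith [sq_nonneg (c - 1)]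
  have hc710 : c ≤ 7/10 := by nlinarith [sq_nonneg (c - 7/10)]
  have h1c : (0:ℝ) < 1 - c := by linarith
  have h2c : (0:ℝ) < 1 + c := by linarith
  -- D₁
  have hd1 : StripDenom x y a b 1 = (1/(1-c))*(1+c) + (1/(1+c))*(1-c) := by
    simp only [StripDenom]
    norm_num [hx0, ha1, hb1, hc]
  have hD1pos : 4 < StripDenom x y a b 1 := by
    rw [hd1, div_mul_eq_mul_div, div_mul_eq_mul_div, div_add_div _ _ (ne_of_gt h1c) (ne_of_gt h2c),
      lt_div_iff₀ (by nlinarith)]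
    nlinarith
  have hD1le : StripDenom x y a b 1 ≤ 28/5 := by
    rw [hd1, div_mul_eq_mul_div, div_mul_eq_mul_div, div_add_div _ _ (ne_of_gt h1c) (ne_of_gt h2c),
      div_le_iff₀ (by nlinarith)]
    nlinarith
  have hD1pos' : (0:ℝ) < StripDenom x y a b 1 := by linarith
  -- y₁
  have hy1 : y 1 = c - 4*c/StripDenom x y a b 1 := by
    have h := (hstep 1 le_rfl).2.1
    simp only [show (1:ℕ)-1 = 0 from rfl, hc] at h
    exact h
  have hy1pos : 0 < y 1 := by
    rw [hy1]
    have h4 : 4*c/StripDenom x y a b 1 < c := by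
      rw [div_lt_iff₀ hD1pos']
      have := mul_lt_mul_of_pos_left hD1pos hc0
      linarith
    linarith
  have hy1le27 : y 1 ≤ 2/7 * c := by
    rw [hy1]
    have h4 : (20:ℝ)/28 * c ≤ 4*c/StripDenom x y a b 1 := by
      rw [le_div_iff₀ hD1pos']
      have := mul_le_mul_of_nonneg_left hD1le hc0.le
      nlinarith [this]
    linarith
  have hy15 : y 1 ≤ 1/5 := by nlinarith [hy1le27, hc710, hc0]
  -- key denominator recursion step
  have hDstep : ∀ i : ℕ, 1 ≤ i → StripDenom x y a b i ≠ 0 → 1 - y i ≠ 0 → 1 + y i ≠ 0 →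
      StripDenom x y a b (i+1) = StripDenom x y a b i + 8*(y i)^2/(1-(y i)^2) := by
    intro i hi hDne hy1ne hy2ne
    obtain ⟨hxi, hyi, hai, hbi⟩ := hstep i hi
    have h4 : 4 * y (i-1) / StripDenom x y a b i = y (i-1) - y i := by linarith [hyi]
    have hw : 2 * (a i - b i) * y (i-1) / StripDenom x y a b i
        = (a i - b i) * (y (i-1) - y i) / 2 := by
      rw [show 2 * (a i - b i) * y (i-1) / StripDenom x y a b i
          = (a i - b i) * (4 * y (i-1) / StripDenom x y a b i) / 2 by ring, h4]
    rw [hw] at hxi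
    have key := denom_key (a i - x (i-1)) (b i - x (i-1)) (y (i-1)) (y i) hy1ne hy2ne
    show (a (i+1) - x (i+1-1)) * (1 + y (i+1-1)) + (b (i+1) - x (i+1-1)) * (1 - y (i+1-1))
        = StripDenom x y a b i + 8*(y i)^2/(1-(y i)^2)
    simp only [Nat.add_sub_cancel]
    rw [hai, hbi, hxi]
    show _ = (a i - x (i-1)) * (1 + y (i-1)) + (b i - x (i-1)) * (1 - y (i-1))
        + 8*(y i)^2/(1-(y i)^2)
    linear_combination key
  -- main invariant
  have key : ∀ n : ℕ, 1 ≤ n →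
      0 < y n ∧ y n ≤ 1/5 ∧ 4 < StripDenom x y a b n ∧
      StripDenom x y a b n ≤ 31/5 - 31/12 * y n ∧
      (∑ j ∈ Finset.Icc 1 n, y j) ≤ 31/20 * y 1 - 11/20 * y n := by
    intro n hn
    induction n, hn using Nat.le_induction with
    | base =>
      refine ⟨hy1pos, hy15, hD1pos, by linarith, ?_⟩
      rw [Finset.Icc_self, Finset.sum_singleton]
      linarith
    | succ n hn ih =>
      obtain ⟨hyn, hyn5, hDn, hDnle, hSn⟩ := ih
      have h1y : 1 - y n ≠ 0 := by intro h; nlinarith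
      have h2y : 1 + y n ≠ 0 := by intro h; nlinarith
      have hDne : StripDenom x y a b n ≠ 0 := by positivity
      have hDrec := hDstep n hn hDne h1y h2y
      have h1y2 : (0:ℝ) < 1 - (y n)^2 := by nlinarith
      have hincr0 : 0 ≤ 8*(y n)^2/(1-(y n)^2) := by positivity
      have hincr : 8*(y n)^2/(1-(y n)^2) ≤ 5/3 * y n := by
        rw [div_le_iff₀ h1y2]; nlinarith
      have hDn1gt : 4 < StripDenom x y a b (n+1) := by rw [hDrec]; linarith
      have hDn1le : StripDenom x y a b (n+1) ≤ 31/5 - 11/12 * y n := by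
        rw [hDrec]; linarith
      have hDn1pos : (0:ℝ) < StripDenom x y a b (n+1) := by linarith
      have hyn1 : y (n+1) = y n - 4 * y n / StripDenom x y a b (n+1) := by
        have h := (hstep (n+1) (by omega)).2.1
        simpa only [Nat.add_sub_cancel] using h
      have hyn1pos : 0 < y (n+1) := by
        rw [hyn1]
        have : 4 * y n / StripDenom x y a b (n+1) < y n := by
          rw [div_lt_iff₀ hDn1pos]; nlinarith
        linarith
      have hratio : y (n+1) ≤ 11/31 * y n := by
        rw [hyn1]
        have : (20:ℝ)/31 * y n ≤ 4 * y n / StripDenom x y a b (n+1) := by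
          rw [le_div_iff₀ hDn1pos]; nlinarith
        linarith
      refine ⟨hyn1pos, by linarith, hDn1gt, by linarith, ?_⟩
      rw [Finset.sum_Icc_succ_top (by omega : 1 ≤ n+1)]
      linarith
  -- bound on (2i−1) − bᵢ
  have hb : ∀ i : ℕ, 1 ≤ i →
      0 ≤ (2 * (i:ℝ) - 1) - b i ∧
      (2 * (i:ℝ) - 1) - b i ≤ c + 2 * (∑ j ∈ Finset.Icc 1 i, y j) - 2 * y i := by
    intro i hi
    induction i, hi using Nat.le_induction with
    | base =>
      rw [Finset.Icc_self, Finset.sum_singleton]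
      constructor
      · rw [hb1]
        have : 1 / (1 + c) ≤ 1 := by rw [div_le_one h2c]; linarith
        push_cast; linarith
      · rw [hb1]
        have h : 1 - c ≤ 1 / (1 + c) := by
          rw [le_div_iff₀ h2c]; nlinarith
        push_cast; linarith
    | succ i hi ih =>
      obtain ⟨hT0, hTle⟩ := ih
      obtain ⟨hyi, hyi5, -, -, -⟩ := key i hi
      obtain ⟨hyi1, -, -, -, -⟩ := key (i+1) (by omega)
      have hbi1 : b (i+1) = b i + 2 / (1 + y i) := (hstep i hi).2.2.2
      have hfrac : 2 / (1 + y i) = 2 - 2 * y i / (1 + y i) := by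
        field_simp
        ring
      have hfr0 : 0 < 2 * y i / (1 + y i) := by positivity
      have hfr2 : 2 * y i / (1 + y i) ≤ 2 * y i := by
        rw [div_le_iff₀ (by linarith)]; nlinarith
      rw [Finset.sum_Icc_succ_top (by omega : 1 ≤ i+1)]
      constructor
      · rw [hbi1, hfrac]; push_cast; linarith
      · rw [hbi1, hfrac]; push_cast; linarith
  -- conclusion
  intro i hi
  obtain ⟨hT0, hTle⟩ := hb i hi
  obtain ⟨hyi, -, -, -, hSi⟩ := key i hi
  have hSi' : (∑ j ∈ Finset.Icc 1 i, y j) ≤ 31/20 * y 1 := by linarith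
  rw [abs_le]
  constructor
  · have : (2 * (i:ℝ) - 1) - b i ≤ c + 2 * (31/20 * y 1) := by linarith
    nlinarith
  · linarith
end
end

section
/- Let 1/√3 < y₀ < 3/√19, let the sequences (xᵢ), (yᵢ), (aᵢ), (bᵢ) be defined by the strip recursion, and let ξᵢ = xᵢ − 2i for i ≥ 0. Then for every i ≥ 0 one has |ξᵢ| ≤ (4y₀/(1 − y₀) + 4y₀)·y₀. -/
noncomputable section

lemma denom_step (A B X Y Xn Yn E En : ℝ)
    (hE : E = (A - X) * (1 + Y) + (B - X) * (1 - Y))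
    (hEn : En = (A + 2 / (1 - Yn) - Xn) * (1 + Yn) + (B + 2 / (1 + Yn) - Xn) * (1 - Yn))
    (hXn : Xn = X + 2 - 2 * (A - B) * Y / E)
    (hYn : Yn = Y - 4 * Y / E)
    (hE0 : E ≠ 0) (h1 : 1 - Yn ≠ 0) (h2 : 1 + Yn ≠ 0) :
    En = E + 8 * Yn ^ 2 / (1 - Yn ^ 2) := by
  have h12 : 1 - Yn ^ 2 ≠ 0 := by
    have h : 1 - Yn ^ 2 = (1 - Yn) * (1 + Yn) := by ring
    rw [h]; exact mul_ne_zero h1 h2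
  have hYnE : Yn * E = Y * E - 4 * Y := by
    rw [hYn]; field_simp
  have expand : En = (A + B - 2 * Xn) + (A - B) * Yn
      + (2 * (1 + Yn) / (1 - Yn) + 2 * (1 - Yn) / (1 + Yn)) := by
    rw [hEn]; ring
  have hfrac : 2 * (1 + Yn) / (1 - Yn) + 2 * (1 - Yn) / (1 + Yn)
      = 4 + 8 * Yn ^ 2 / (1 - Yn ^ 2) := by
    field_simp; ring
  have hlin : (A + B - 2 * Xn) + (A - B) * Yn = E - 4 := by
    rw [hXn]
    field_simp
    linear_combination (A - B) * hYnE - E * hE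
  rw [expand, hfrac, hlin]; ring

set_option maxHeartbeats 1000000

/-- For `1/√3 < y₀ < 3/√19` and `ξᵢ = xᵢ − 2i` one has
`|ξᵢ| ≤ (4y₀/(1 − y₀) + 4y₀)·y₀` for all `i ≥ 0`. -/
theorem statement13 (x y a b : ℕ → ℝ)
    (hy0 : 1 / Real.sqrt 3 < y 0) (hy0' : y 0 < 3 / Real.sqrt 19)
    (hrec : StripRec x y a b) :
    ∀ i : ℕ, |x i - 2 * (i : ℝ)| ≤ (4 * y 0 / (1 - y 0) + 4 * y 0) * y 0 := by
  obtain ⟨hx0, ha1, hb1, hstep⟩ := hrec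
  have h3p : (0:ℝ) < Real.sqrt 3 := Real.sqrt_pos.mpr (by norm_num)
  have h19p : (0:ℝ) < Real.sqrt 19 := Real.sqrt_pos.mpr (by norm_num)
  have hcpos : 0 < y 0 := lt_trans (by positivity) hy0
  have e3 : (1 / Real.sqrt 3) * (1 / Real.sqrt 3) = 1 / 3 := by
    rw [div_mul_div_comm, Real.mul_self_sqrt (by norm_num)]; norm_num
  have e19 : (3 / Real.sqrt 19) * (3 / Real.sqrt 19) = 9 / 19 := by
    rw [div_mul_div_comm, Real.mul_self_sqrt (by norm_num)]; norm_num
  have hct : 1 / 3 < (y 0) ^ 2 := by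
    nlinarith [mul_self_lt_mul_self (le_of_lt (show (0:ℝ) < 1 / Real.sqrt 3 by positivity)) hy0,
      e3]
  have hct' : (y 0) ^ 2 < 9 / 19 := by
    nlinarith [mul_self_lt_mul_self hcpos.le hy0', e19]
  have hclt : y 0 < 0.6883 := by nlinarith [hct', hcpos]
  have hcgt : 0.577 < y 0 := by nlinarith [hct, hcpos]
  have h1m : (0:ℝ) < 1 - y 0 := by linarith
  have h1p : (0:ℝ) < 1 + y 0 := by linarith
  have hsq : (0:ℝ) < 1 - (y 0) ^ 2 := by nlinarith [hct']
  have key : ∀ n : ℕ, 1 ≤ n →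
      (0 ≤ y n ∧ y n ≤ 0.197 * 0.35 ^ (n - 1)) ∧
      (4 < StripDenom x y a b n ∧ StripDenom x y a b n ≤ 6.1 - 0.5 * 0.1225 ^ (n - 1)) ∧
      (0 ≤ a n - b n ∧ a n - b n ≤ 4.1 - 1.3 * 0.35 ^ (n - 1)) ∧
      (x n - 2 * (n : ℝ) ≤ 0 ∧ -0.65 - 0.7 * (1 - 0.35 ^ (n - 1)) ≤ x n - 2 * (n : ℝ)) := by
    intro n hn
    induction n, hn using Nat.le_induction with
    | base =>
      obtain ⟨hx1, hy1, -, -⟩ := hstep 1 le_rfl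
      simp only [Nat.sub_self] at hx1 hy1
      have hD1v : StripDenom x y a b 1 = (2 + 2 * (y 0) ^ 2) / (1 - (y 0) ^ 2) := by
        simp only [StripDenom, Nat.sub_self]
        rw [hx0, ha1, hb1]
        field_simp
        ring
      have hD1l : 4 < StripDenom x y a b 1 := by
        rw [hD1v, lt_div_iff₀ hsq]; linarith [hct]
      have hD1u : StripDenom x y a b 1 ≤ 5.6 := by
        rw [hD1v, div_le_iff₀ hsq]; linarith [hct']
      have hD1pos : (0:ℝ) < StripDenom x y a b 1 := by linarith
      have hy1a : 0 ≤ y 1 := by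
        rw [hy1, sub_nonneg, div_le_iff₀ hD1pos]
        linarith [mul_nonneg hcpos.le (by linarith : (0:ℝ) ≤ StripDenom x y a b 1 - 4)]
      have hy1b : y 1 ≤ 0.197 := by
        have hmono : y 0 - 0.197 ≤ 4 * y 0 / StripDenom x y a b 1 := by
          rw [le_div_iff₀ hD1pos]
          linarith [mul_nonneg (by linarith : (0:ℝ) ≤ y 0 - 0.197)
            (by linarith : (0:ℝ) ≤ 5.6 - StripDenom x y a b 1)]
        rw [hy1]
        linarith [hmono]
      have hs1v : a 1 - b 1 = 2 * y 0 / (1 - (y 0) ^ 2) := by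
        rw [ha1, hb1]
        field_simp
        ring
      have hs1a : 0 ≤ a 1 - b 1 := by rw [hs1v]; positivity
      have hs1b : a 1 - b 1 ≤ 2.8 := by
        rw [hs1v, div_le_iff₀ hsq]; linarith [hct', hclt]
      have h1psq : (0:ℝ) < 1 + (y 0) ^ 2 := by positivity
      have hxi1v : x 1 - 2 = -(2 * (y 0) ^ 2 / (1 + (y 0) ^ 2)) := by
        rw [hx1, hx0, hs1v, hD1v]
        have h2t : (2 + 2 * (y 0) ^ 2) ≠ 0 := by positivity
        field_simp
        ring
      have hxi1a : x 1 - 2 ≤ 0 := by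
        rw [hxi1v, neg_nonpos]; positivity
      have hxi1b : -0.65 ≤ x 1 - 2 := by
        rw [hxi1v]
        have : 2 * (y 0) ^ 2 / (1 + (y 0) ^ 2) ≤ 0.65 := by
          rw [div_le_iff₀ h1psq]; linarith [hct']
        linarith
      refine ⟨⟨hy1a, by simpa using hy1b⟩,
        ⟨hD1l, by simp only [Nat.sub_self, pow_zero, mul_one]; linarith⟩,
        ⟨hs1a, by simp only [Nat.sub_self, pow_zero, mul_one]; linarith⟩,
        by push_cast; linarith, ?_⟩
      push_cast
      simp only [Nat.sub_self, pow_zero]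
      linarith
    | succ m hm ih =>
      obtain ⟨k, rfl⟩ : ∃ k, m = k + 1 := ⟨m - 1, by omega⟩
      simp only [Nat.add_sub_cancel] at ih ⊢
      obtain ⟨⟨hya, hyb⟩, ⟨hDa, hDb⟩, ⟨hsa, hsb⟩, hxa, hxb⟩ := ih
      obtain ⟨hx1', hy1', ha2', hb2'⟩ := hstep (k + 1) (by omega)
      obtain ⟨hx2', hy2', -, -⟩ := hstep (k + 1 + 1) (by omega)
      simp only [Nat.add_sub_cancel] at hx1' hy1' hx2' hy2'
      have hpow : (0:ℝ) < 0.35 ^ k := by positivity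
      have hpow1 : (0.35:ℝ) ^ k ≤ 1 := pow_le_one₀ (by norm_num) (by norm_num)
      have hpowq : (0:ℝ) < 0.1225 ^ k := by positivity
      have hpowq1 : (0.1225:ℝ) ^ k ≤ 1 := pow_le_one₀ (by norm_num) (by norm_num)
      have hsqk : ((0.35:ℝ) ^ k) * ((0.35:ℝ) ^ k) = (0.1225:ℝ) ^ k := by
        rw [← mul_pow]; norm_num
      have hyub : y (k + 1) ≤ 0.197 := by linarith [hyb, hpow1]
      have h1m' : (0:ℝ) < 1 - y (k + 1) := by linarith
      have h1p' : (0:ℝ) < 1 + y (k + 1) := by linarith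
      have hD1pos : (0:ℝ) < StripDenom x y a b (k + 1) := by linarith
      have hD2eq : StripDenom x y a b (k + 1 + 1)
          = StripDenom x y a b (k + 1) + 8 * (y (k + 1)) ^ 2 / (1 - (y (k + 1)) ^ 2) := by
        refine denom_step (a (k + 1)) (b (k + 1)) (x k) (y k) (x (k + 1)) (y (k + 1))
          (StripDenom x y a b (k + 1)) (StripDenom x y a b (k + 1 + 1)) ?_ ?_ hx1' hy1'
          (ne_of_gt hD1pos) (ne_of_gt h1m') (ne_of_gt h1p')
        · simp only [StripDenom, Nat.add_sub_cancel]
        · simp only [StripDenom, Nat.add_sub_cancel]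
          rw [ha2', hb2']
      have hysq : (y (k + 1)) ^ 2 ≤ 0.038809 * 0.1225 ^ k := by
        linarith [mul_self_le_mul_self hya hyb, hsqk]
      have hy2c : (y (k + 1)) ^ 2 ≤ 0.038809 := by
        linarith [hysq, hpowq1]
      have hsqpos : (0:ℝ) < 1 - (y (k + 1)) ^ 2 := by linarith [hy2c]
      have hincub : 8 * (y (k + 1)) ^ 2 / (1 - (y (k + 1)) ^ 2) ≤ 0.33 * 0.1225 ^ k := by
        rw [div_le_iff₀ hsqpos]
        linarith [hysq, mul_le_mul_of_nonneg_left hy2c hpowq.le]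
      have hinc0 : 0 ≤ 8 * (y (k + 1)) ^ 2 / (1 - (y (k + 1)) ^ 2) := by positivity
      have hD2l : 4 < StripDenom x y a b (k + 1 + 1) := by rw [hD2eq]; linarith
      have hD2pos : (0:ℝ) < StripDenom x y a b (k + 1 + 1) := by linarith
      have hD2u : StripDenom x y a b (k + 1 + 1) ≤ 6.1 - 0.5 * 0.1225 ^ (k + 1) := by
        rw [hD2eq]
        linarith [hDb, hincub, pow_succ (0.1225:ℝ) k]
      have hD2u6 : StripDenom x y a b (k + 1 + 1) ≤ 6.1 := by
        have := pow_pos (show (0:ℝ) < 0.1225 by norm_num) (k + 1)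
        linarith [hD2u]
      have hy2a : 0 ≤ y (k + 1 + 1) := by
        rw [hy2', sub_nonneg, div_le_iff₀ hD2pos]
        linarith [mul_nonneg hya (by linarith : (0:ℝ) ≤ StripDenom x y a b (k + 1 + 1) - 4)]
      have hy2b : y (k + 1 + 1) ≤ 0.197 * 0.35 ^ (k + 1) := by
        rw [hy2', pow_succ]
        have h47 : 0.65 * y (k + 1) ≤ 4 * y (k + 1) / StripDenom x y a b (k + 1 + 1) := by
          rw [le_div_iff₀ hD2pos]
          linarith [mul_nonneg hya
            (by linarith : (0:ℝ) ≤ 6.1 - StripDenom x y a b (k + 1 + 1)), hya]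
        linarith [h47, hyb]
      have hs2v : a (k + 1 + 1) - b (k + 1 + 1)
          = (a (k + 1) - b (k + 1)) + (4 * y (k + 1) / (1 - (y (k + 1)) ^ 2)) := by
        rw [ha2', hb2']
        have hfr : 2 / (1 - y (k + 1)) - 2 / (1 + y (k + 1))
            = 4 * y (k + 1) / (1 - (y (k + 1)) ^ 2) := by
          rw [div_sub_div _ _ (ne_of_gt h1m') (ne_of_gt h1p')]
          rw [show (1 - y (k+1)) * (1 + y (k+1)) = 1 - (y (k+1))^2 by ring]
          rw [show 2 * (1 + y (k+1)) - (1 - y (k+1)) * 2 = 4 * y (k+1) by ring]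
        linarith [hfr]
      have hfr0 : 0 ≤ 4 * y (k + 1) / (1 - (y (k + 1)) ^ 2) := by positivity
      have hfrub : 4 * y (k + 1) / (1 - (y (k + 1)) ^ 2) ≤ 0.83 * 0.35 ^ k := by
        rw [div_le_iff₀ hsqpos]
        linarith [hyb, mul_le_mul_of_nonneg_left hy2c hpow.le]
      have hs2a : 0 ≤ a (k + 1 + 1) - b (k + 1 + 1) := by rw [hs2v]; linarith
      have hs2b : a (k + 1 + 1) - b (k + 1 + 1) ≤ 4.1 - 1.3 * 0.35 ^ (k + 1) := by
        rw [hs2v]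
        linarith [hsb, hfrub, pow_succ (0.35:ℝ) k]
      have hs41 : a (k + 1 + 1) - b (k + 1 + 1) ≤ 4.1 := by
        have := pow_pos (show (0:ℝ) < 0.35 by norm_num) (k + 1)
        linarith [hs2b]
      have hterm : 2 * (a (k + 1 + 1) - b (k + 1 + 1)) * y (k + 1)
          / StripDenom x y a b (k + 1 + 1) ≤ 0.41 * 0.35 ^ k := by
        rw [div_le_iff₀ hD2pos]
        have hsy : (a (k + 1 + 1) - b (k + 1 + 1)) * y (k + 1) ≤ 4.1 * (0.197 * 0.35 ^ k) :=
          mul_le_mul hs41 hyb hya (by norm_num)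
        linarith [hsy, mul_nonneg (show (0:ℝ) ≤ 0.41 * 0.35 ^ k by positivity)
          (show (0:ℝ) ≤ StripDenom x y a b (k + 1 + 1) - 4 by linarith)]
      have hterm0 : 0 ≤ 2 * (a (k + 1 + 1) - b (k + 1 + 1)) * y (k + 1)
          / StripDenom x y a b (k + 1 + 1) := by positivity
      have hxi2v : x (k + 1 + 1) - 2 * ((k + 1 + 1 : ℕ) : ℝ)
          = (x (k + 1) - 2 * ((k + 1 : ℕ) : ℝ)) - 2 * (a (k + 1 + 1) - b (k + 1 + 1))
            * y (k + 1) / StripDenom x y a b (k + 1 + 1) := by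
        rw [hx2']; push_cast; ring
      refine ⟨⟨hy2a, hy2b⟩, ⟨hD2l, hD2u⟩, ⟨hs2a, hs2b⟩, ?_, ?_⟩
      · rw [hxi2v]; linarith
      · rw [hxi2v, pow_succ]; linarith [hxb, hterm, hpow]
  intro i
  have htar : (1.35:ℝ) ≤ (4 * y 0 / (1 - y 0) + 4 * y 0) * y 0 := by
    have h5 : (5.4:ℝ) ≤ 4 * y 0 / (1 - y 0) := by
      rw [le_div_iff₀ h1m]; linarith [hcgt]
    linarith [mul_le_mul_of_nonneg_right h5 hcpos.le, hct, hcgt]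
  rcases Nat.eq_zero_or_pos i with h0 | h1
  · subst h0
    rw [hx0]
    norm_num
    linarith
  · obtain ⟨⟨-, -⟩, ⟨-, -⟩, ⟨-, -⟩, hu, hl⟩ := key i h1
    have hpi : (0:ℝ) < 0.35 ^ (i - 1) := by positivity
    have hpi1 : (0.35:ℝ) ^ (i - 1) ≤ 1 := pow_le_one₀ (by norm_num) (by norm_num)
    rw [abs_le]
    constructor
    · linarith
    · linarith
end
end

section
/- Let y₀ = 1/√3 and let the sequences (xᵢ), (yᵢ), (aᵢ), (bᵢ) be defined by the strip recursion. Then for every i ≥ 1: xᵢ = 2i − 1/2, yᵢ = 0, aᵢ = 2i + (√3 − 1)/2, and bᵢ = 2i − (√3 + 1)/2. -/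
noncomputable section

/-- For `y₀ = 1/√3` the strip recursion gives `xᵢ = 2i − 1/2`, `yᵢ = 0`,
`aᵢ = 2i + (√3 − 1)/2` and `bᵢ = 2i − (√3 + 1)/2` for all `i ≥ 1`. -/
theorem statement14 (x y a b : ℕ → ℝ)
    (hy0 : y 0 = 1 / Real.sqrt 3)
    (hrec : StripRec x y a b) :
    ∀ i : ℕ, 1 ≤ i →
      x i = 2 * (i : ℝ) - 1 / 2 ∧
      y i = 0 ∧
      a i = 2 * (i : ℝ) + (Real.sqrt 3 - 1) / 2 ∧
      b i = 2 * (i : ℝ) - (Real.sqrt 3 + 1) / 2 := by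

  obtain ⟨hx0, ha1, hb1, hstep⟩ := hrec
  set s := Real.sqrt 3 with hsdef
  have hs : s * s = 3 := Real.mul_self_sqrt (by norm_num)
  have hs1 : 1 < s := by nlinarith [Real.sqrt_nonneg 3]
  have hs0 : (0:ℝ) < s := by linarith
  have ha1' : a 1 = 2 * (1:ℝ) + (s - 1) / 2 := by
    rw [ha1, hy0]
    have h1 : (1:ℝ) - 1 / s ≠ 0 := by
      have : 1 / s < 1 := by rw [div_lt_one hs0]; exact hs1
      linarith
    rw [div_eq_iff h1]
    have hsne : s ≠ 0 := ne_of_gt hs0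
    field_simp
    nlinarith
  have hb1' : b 1 = 2 * (1:ℝ) - (s + 1) / 2 := by
    rw [hb1, hy0]
    have h1 : (1:ℝ) + 1 / s ≠ 0 := by positivity
    rw [div_eq_iff h1]
    have hsne : s ≠ 0 := ne_of_gt hs0
    field_simp
    nlinarith
  intro i hi
  induction i with
  | zero => omega
  | succ n ih =>
    rcases Nat.eq_or_lt_of_le hi with h1 | h2
    · -- n + 1 = 1, i.e. n = 0
      have hn : n = 0 := by omega
      subst hn
      have hD : StripDenom x y a b 1 = 4 := by
        simp only [StripDenom]
        rw [show (1:ℕ) - 1 = 0 from rfl, hx0, ha1', hb1', hy0]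
        field_simp
        nlinarith
      obtain ⟨hx1, hy1, -, -⟩ := hstep 1 le_rfl
      rw [hD] at hx1 hy1
      rw [show (1:ℕ) - 1 = 0 from rfl, hx0, ha1', hb1', hy0] at hx1
      rw [show (1:ℕ) - 1 = 0 from rfl, hy0] at hy1
      have hy1' : y 1 = 0 := by
        rw [hy1]; field_simp; ring
      refine ⟨?_, hy1', by simpa using ha1', by simpa using hb1'⟩
      rw [hx1]
      have hsne : s ≠ 0 := ne_of_gt hs0
      push_cast
      field_simp
      nlinarith
    · -- n ≥ 1
      have hn : 1 ≤ n := by omega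
      obtain ⟨hxn, hyn, han, hbn⟩ := ih hn
      obtain ⟨-, -, han1, hbn1⟩ := hstep n hn
      rw [hyn] at han1 hbn1
      have han1' : a (n + 1) = 2 * ((n:ℝ) + 1) + (s - 1) / 2 := by
        rw [han1, han]; norm_num; ring
      have hbn1' : b (n + 1) = 2 * ((n:ℝ) + 1) - (s + 1) / 2 := by
        rw [hbn1, hbn]; norm_num; ring
      have hD : StripDenom x y a b (n + 1) = 4 := by
        simp only [StripDenom, Nat.add_sub_cancel]
        rw [hxn, hyn, han1', hbn1']; ring
      obtain ⟨hx1, hy1, -, -⟩ := hstep (n + 1) (by omega)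
      rw [hD] at hx1 hy1
      simp only [Nat.add_sub_cancel] at hx1 hy1
      rw [hyn] at hy1
      rw [hyn, hxn] at hx1
      refine ⟨?_, by simpa using hy1, ?_, ?_⟩
      · rw [hx1]; push_cast; ring
      · rw [han1']; push_cast; ring
      · rw [hbn1']; push_cast; ring
end
end
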